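/- arXiv:1004.1661 — 5 statements merged into one kernel-verified Lean document; each statement's English description precedes it below -/
import Mathlib

section
/- For any natural numbers d ≥ 1 and n > 1 there exists a natural number t ≥ 1 such that for every finite simplicial complex 𝒯 in ℝ^d all of whose vertices lie in the integer lattice ℤ^d, the number of lattice points of ℤ^d contained in the dilated set t·|𝒯| (the image of the underlying polyhedron of 𝒯 under the homothety with center the origin and ratio t) is congruent to the Euler characteristic χ(𝒯) modulo n. -/
/-!
Dilating by `t` partitions the lattice points of `t • |K|` according to the open face of `K`
containing them, so it suffices to show that the open simplex `t • σ°` of a lattice simplex `σ`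
with `m` vertices contains `≡ (-1) ^ (m - 1)` lattice points modulo `n` once `n * m! ∣ t`.
Writing the (unique, positive) barycentric weights of such a point as `c + a` with
`c ∈ (0, 1]^m` and `a ∈ ℕ^m`, the fractional parts `c` range over a finite set independent of `t`,
and each `c` of total weight `h` contributes `multichoose m (t - h) = C(t - 1 + m - h, m - 1)`
points. Modulo `n` this vanishes for `h < m` and is `(-1) ^ (m - 1)` for the single `c = 1` of
total weight `m`.
-/

open scoped Nat Pointwise

namespace Nat

theorem dvd_choose_of_mul_dvd {n t k : ℕ} (hk : 0 < k) (h : n * k ∣ t) : n ∣ t.choose k := by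
  obtain ⟨k, rfl⟩ := Nat.exists_eq_add_of_le' hk
  rcases t.eq_zero_or_pos with rfl | ht
  · simp
  obtain ⟨t, rfl⟩ := Nat.exists_eq_add_of_le' ht
  have key : n * (k + 1) ∣ (t + 1).choose (k + 1) * (k + 1) :=
    add_one_mul_choose_eq t k ▸ h.mul_right _
  exact Nat.dvd_of_mul_dvd_mul_right k.succ_pos key

theorem cast_choose_add {n t k : ℕ} (h : n * k ! ∣ t) (a : ℕ) :
    ((t + a).choose k : ZMod n) = a.choose k := by
  -- Vandermonde: every term `C(t, i) * C(a, k - i)` with `0 < i` is divisible by `n`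
  rw [add_choose_eq, Nat.cast_sum, Finset.sum_eq_single_of_mem (0, k) (by simp)]
  · simp
  rintro ⟨i, j⟩ hij hne
  rw [Finset.HasAntidiagonal.mem_antidiagonal] at hij
  have hi : 0 < i := Nat.pos_of_ne_zero fun hi => hne (by simp_all)
  rw [Nat.cast_mul, (ZMod.natCast_eq_zero_iff _ _).2 (dvd_choose_of_mul_dvd hi
    ((Nat.mul_dvd_mul_left n (dvd_factorial hi (by omega))).trans h)), zero_mul]

theorem cast_choose_sub_one {n t : ℕ} (ht : t ≠ 0) :
    ∀ {k : ℕ}, n * k ! ∣ t → ((t - 1).choose k : ZMod n) = (-1) ^ k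
  | 0, _ => by simp
  | k + 1, h => by
    have pascal : (t - 1).choose k + (t - 1).choose (k + 1) = t.choose (k + 1) := by
      obtain ⟨t, rfl⟩ := Nat.exists_eq_add_of_le' (Nat.pos_of_ne_zero ht)
      exact (choose_succ_succ t k).symm
    have hvanish : (t.choose (k + 1) : ZMod n) = 0 := by simpa using cast_choose_add h 0
    have ih := cast_choose_sub_one ht
      ((Nat.mul_dvd_mul_left n (factorial_dvd_factorial k.le_succ)).trans h)
    have := congrArg (Nat.cast : ℕ → ZMod n) pascal
    push_cast at this
    rw [hvanish, ih] at this
    rw [pow_succ]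
    linear_combination this

theorem le_of_mul_factorial_dvd {n m t : ℕ} (ht : t ≠ 0) (h : n * m ! ∣ t) : m ≤ t :=
  (self_le_factorial m).trans (le_of_dvd (pos_of_ne_zero ht) ((Dvd.intro_left n rfl).trans h))

theorem multichoose_sub_eq_choose {m t h : ℕ} (hm : 0 < m) (hmt : m ≤ t) (hhm : h ≤ m) :
    multichoose m (t - h) = (t - 1 + (m - h)).choose (m - 1) := by
  rw [multichoose_eq, show m + (t - h) - 1 = (m - 1) + (t - h) by omega, ← choose_symm_add]
  congr 1
  omega

theorem cast_multichoose_sub_of_lt {n m t h : ℕ} (ht : t ≠ 0) (hmt : n * m ! ∣ t) (hh : 0 < h)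
    (hhm : h < m) : (multichoose m (t - h) : ZMod n) = 0 := by
  rw [multichoose_sub_eq_choose (by omega) (le_of_mul_factorial_dvd ht hmt) hhm.le,
    show t - 1 + (m - h) = t + (m - 1 - h) by omega,
    cast_choose_add ((Nat.mul_dvd_mul_left n (factorial_dvd_factorial (m.sub_le 1))).trans hmt),
    choose_eq_zero_of_lt (by omega), Nat.cast_zero]

theorem cast_multichoose_sub_self {n m t : ℕ} (ht : t ≠ 0) (hmt : n * m ! ∣ t) (hm : 0 < m) :
    (multichoose m (t - m) : ZMod n) = (-1) ^ (m - 1) := by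
  rw [multichoose_sub_eq_choose hm (le_of_mul_factorial_dvd ht hmt) le_rfl, Nat.sub_self,
    add_zero, cast_choose_sub_one ht
      ((Nat.mul_dvd_mul_left n (factorial_dvd_factorial (m.sub_le 1))).trans hmt)]

theorem ceil_add_natCast_of_mem_Ioc {c : ℝ} (hc : c ∈ Set.Ioc 0 1) (a : ℕ) :
    ⌈c + a⌉₊ = a + 1 := by
  rw [ceil_add_natCast hc.1.le, add_comm, (ceil_eq_iff one_ne_zero).2 (by simpa using hc)]

end Nat

theorem sub_natCeil_sub_one_mem_Ioc {w : ℝ} (hw : 0 < w) : w - (⌈w⌉₊ - 1 : ℕ) ∈ Set.Ioc 0 1 := by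
  have h1 : 1 ≤ ⌈w⌉₊ := Nat.one_le_iff_ne_zero.2 (Nat.ceil_pos.2 hw).ne'
  rw [Nat.cast_sub h1, Nat.cast_one]
  constructor
  · linarith [Nat.ceil_lt_add_one hw.le]
  · linarith [Nat.le_ceil w]

theorem finite_setOf_sum_eq {ι : Type*} [Fintype ι] (M : ℕ) :
    {a : ι → ℕ | ∑ i, a i = M}.Finite := by
  classical
  exact Finite.of_equiv _ (Sym.equivNatSumOfFintype ι M)

theorem ncard_setOf_sum_eq {ι : Type*} [Fintype ι] (M : ℕ) :
    {a : ι → ℕ | ∑ i, a i = M}.ncard = (Fintype.card ι).multichoose M := by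
  classical
  rw [← Nat.card_coe_set_eq, ← Sym.card_sym_eq_multichoose, ← Nat.card_eq_fintype_card]
  exact Nat.card_congr (Sym.equivNatSumOfFintype ι M).symm

theorem Set.ncard_biUnion {α β : Type*} {S : Set α} (hS : S.Finite) {A : α → Set β}
    (hA : ∀ a ∈ S, (A a).Finite) (hd : S.PairwiseDisjoint A) :
    (⋃ a ∈ S, A a).ncard = ∑ a ∈ hS.toFinset, (A a).ncard := by
  classical
  induction S, hS using Set.Finite.induction_on with
  | empty => simp
  | @insert a S haS hS ih =>
    have hdisj : Disjoint (A a) (⋃ b ∈ S, A b) := Set.disjoint_iUnion₂_right.2 fun b hb =>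
      hd (.inl rfl) (.inr hb) (ne_of_mem_of_not_mem hb haS).symm
    rw [Set.biUnion_insert, Set.ncard_union_eq hdisj (hA a (.inl rfl))
      (hS.biUnion fun b hb => hA b (.inr hb)),
      ih (fun b hb => hA b (.inr hb)) (hd.subset (Set.subset_insert _ _))]
    simp [haS]

section DilatedOpenSimplex

variable {ι : Type*} [Fintype ι] {E : Type*} [AddCommGroup E] [Module ℝ E]

/-- The relative interior of the simplex spanned by `v`, dilated by `t`, when `v` is affinely
independent. -/
def dilatedOpenSimplex (v : ι → E) (t : ℝ) : Set E :=
  {x | ∃ w : ι → ℝ, (∀ i, 0 < w i) ∧ ∑ i, w i = t ∧ ∑ i, w i • v i = x}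

theorem dilatedOpenSimplex_subset_smul_convexHull (v : ι → E) {t : ℝ} (ht : 0 < t) :
    dilatedOpenSimplex v t ⊆ t • convexHull ℝ (Set.range v) := by
  rintro _ ⟨w, hw, hwt, rfl⟩
  rw [Set.mem_smul_set_iff_inv_smul_mem₀ ht.ne', Finset.smul_sum]
  simp_rw [smul_smul]
  refine (convex_convexHull ℝ _).sum_mem (fun i _ => (mul_pos (inv_pos.2 ht) (hw i)).le) ?_
    fun i _ => subset_convexHull ℝ _ (Set.mem_range_self i)
  rw [← Finset.mul_sum, hwt, inv_mul_cancel₀ ht.ne']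

theorem exists_mem_dilatedOpenSimplex_of_mem_convexHull {s : Finset E} {y : E}
    (hy : y ∈ convexHull ℝ (s : Set E)) {t : ℝ} (ht : 0 < t) :
    ∃ r ⊆ s, r.Nonempty ∧ t • y ∈ dilatedOpenSimplex ((↑) : r → E) t := by
  classical
  obtain ⟨w, hw0, hw1, rfl⟩ := Finset.mem_convexHull'.1 hy
  set r := s.filter (w · ≠ 0)
  have hr1 : ∑ x ∈ r, w x = 1 := by rw [Finset.sum_filter_ne_zero, hw1]
  refine ⟨r, Finset.filter_subset _ _, Finset.nonempty_of_sum_ne_zero (f := w) (by simp [hr1]),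
    fun x => t * w x, fun x => ?_, ?_, ?_⟩
  · obtain ⟨hxs, hx0⟩ := Finset.mem_filter.1 x.2
    exact mul_pos ht ((hw0 _ hxs).lt_of_ne' hx0)
  · rw [Finset.sum_coe_sort r (fun x => t * w x), ← Finset.mul_sum, hr1, mul_one]
  · rw [Finset.sum_coe_sort r (fun x => (t * w x) • x), Finset.smul_sum]
    simp_rw [mul_smul]
    exact Finset.sum_filter_of_ne fun x _ h hx => h (by rw [hx, zero_smul, smul_zero])

theorem AffineIndependent.subset_of_mem_dilatedOpenSimplex {s r : Finset E}
    (hs : AffineIndependent ℝ ((↑) : s → E)) (hrs : r ⊆ s) {t : ℝ} {x : E}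
    (hx : x ∈ dilatedOpenSimplex ((↑) : s → E) t) (hxr : x ∈ t • convexHull ℝ (r : Set E)) :
    s ⊆ r := by
  classical
  obtain ⟨w, hw, hwt, rfl⟩ := hx
  obtain ⟨_, hy, hyx⟩ := hxr
  obtain ⟨u, -, hu1, rfl⟩ := Finset.mem_convexHull'.1 hy
  set u' : s → ℝ := fun x => if (x : E) ∈ r then t * u x else 0
  have hu'1 : ∑ x, u' x = t := by
    rw [Finset.sum_coe_sort s (fun x => if x ∈ r then t * u x else 0), Finset.sum_ite_mem,
      Finset.inter_eq_right.2 hrs, ← Finset.mul_sum, hu1, mul_one]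
  have hu'x : ∑ x, u' x • (x : E) = t • ∑ y ∈ r, u y • y := by
    simp_rw [u', ite_smul, zero_smul]
    rw [Finset.sum_coe_sort s (fun x => if x ∈ r then (t * u x) • x else 0), Finset.sum_ite_mem,
      Finset.inter_eq_right.2 hrs, Finset.smul_sum]
    simp_rw [mul_smul]
  have hwu := hs.eq_of_sum_eq_sum (s := Finset.univ) (by rw [hwt, hu'1]) (hu'x.trans hyx).symm
  intro x hx
  by_contra hxr
  have := hwu ⟨x, hx⟩ (Finset.mem_univ _)
  simp only [u', hxr, if_false] at this
  exact (hw _).ne' this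

namespace Geometry.SimplicialComplex

variable (K : SimplicialComplex ℝ E) {t : ℝ}

theorem smul_space_eq_biUnion (ht : 0 < t) :
    t • K.space = ⋃ s ∈ K.faces, dilatedOpenSimplex ((↑) : s → E) t := by
  ext x
  simp only [Set.mem_iUnion, exists_prop]
  constructor
  · rintro ⟨y, hy, rfl⟩
    obtain ⟨s, hs, hys⟩ := K.mem_space_iff.1 hy
    obtain ⟨r, hrs, hr, hxr⟩ := exists_mem_dilatedOpenSimplex_of_mem_convexHull hys ht
    exact ⟨r, K.down_closed hs hrs hr, hxr⟩
  · rintro ⟨s, hs, hx⟩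
    have hx := dilatedOpenSimplex_subset_smul_convexHull _ ht hx
    rw [Subtype.range_coe] at hx
    exact Set.smul_set_mono (K.convexHull_subset_space hs) hx

theorem pairwiseDisjoint_dilatedOpenSimplex (ht : 0 < t) :
    K.faces.PairwiseDisjoint fun s => dilatedOpenSimplex ((↑) : s → E) t := by
  classical
  have subset_of_mem_of_mem : ∀ s ∈ K.faces, ∀ s' ∈ K.faces, ∀ x,
      x ∈ dilatedOpenSimplex ((↑) : s → E) t → x ∈ dilatedOpenSimplex ((↑) : s' → E) t →
        s ⊆ s' := by
    intro s hs s' hs' x hx hx'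
    have hx_inter : x ∈ t • convexHull ℝ ((s ∩ s' : Finset E) : Set E) := by
      have := Set.mem_inter (dilatedOpenSimplex_subset_smul_convexHull _ ht hx)
        (dilatedOpenSimplex_subset_smul_convexHull _ ht hx')
      rwa [Subtype.range_coe, Subtype.range_coe, ← Set.smul_set_inter₀ ht.ne',
        K.convexHull_inter_convexHull hs hs', ← Finset.coe_inter] at this
    exact ((K.indep hs).subset_of_mem_dilatedOpenSimplex Finset.inter_subset_left hx
      hx_inter).trans Finset.inter_subset_right
  exact fun s hs s' hs' hne => Set.disjoint_left.2 fun x hx hx' =>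
    hne ((subset_of_mem_of_mem s hs s' hs' x hx hx').antisymm
      (subset_of_mem_of_mem s' hs' s hs x hx' hx))

end Geometry.SimplicialComplex

end DilatedOpenSimplex

section Weights

variable {ι : Type*} [Fintype ι] {E : Type*} [AddCommGroup E] [Module ℝ E] (L : Submodule ℤ E)

def latticeWeights (v : ι → E) (t : ℝ) : Set (ι → ℝ) :=
  {w | (∀ i, 0 < w i) ∧ ∑ i, w i = t ∧ ∑ i, w i • v i ∈ L}

def fractionalWeights (v : ι → E) : Set (ι → ℝ) :=
  {c | (∀ i, c i ∈ Set.Ioc 0 1) ∧ (∃ h : ℕ, ∑ i, c i = h) ∧ ∑ i, c i • v i ∈ L}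

def natTranslates (c : ι → ℝ) (t : ℝ) : Set (ι → ℝ) :=
  (fun a : ι → ℕ => c + fun i => (a i : ℝ)) '' {a | ∑ i, c i + ∑ i, (a i : ℝ) = t}

variable {L} {v : ι → E}

theorem ncard_dilatedOpenSimplex_inter (hv : AffineIndependent ℝ v) (t : ℝ) :
    (dilatedOpenSimplex v t ∩ L).ncard = (latticeWeights L v t).ncard := by
  have himage : dilatedOpenSimplex v t ∩ L = (∑ i, · i • v i) '' latticeWeights L v t := by
    ext x
    constructor
    · rintro ⟨⟨w, hw, hwt, rfl⟩, hx⟩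
      exact ⟨w, ⟨hw, hwt, hx⟩, rfl⟩
    · rintro ⟨w, ⟨hw, hwt, hx⟩, rfl⟩
      exact ⟨⟨w, hw, hwt, rfl⟩, hx⟩
  refine himage ▸ Set.InjOn.ncard_image ?_
  rintro w ⟨-, hwt, -⟩ w' ⟨-, hwt', -⟩ h
  exact funext fun i => hv.eq_of_sum_eq_sum (hwt.trans hwt'.symm) h i (Finset.mem_univ i)

theorem sum_natCast_smul_mem (hvL : ∀ i, v i ∈ L) (a : ι → ℕ) : ∑ i, (a i : ℝ) • v i ∈ L :=
  L.sum_mem fun i _ => by rw [Nat.cast_smul_eq_nsmul]; exact L.nsmul_mem (hvL i) _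

theorem latticeWeights_eq_biUnion (hvL : ∀ i, v i ∈ L) (t : ℕ) :
    latticeWeights L v t = ⋃ c ∈ fractionalWeights L v, natTranslates c t := by
  ext w
  simp only [Set.mem_iUnion, exists_prop]
  constructor
  · rintro ⟨hw, hwt, hwL⟩
    set a : ι → ℕ := fun i => ⌈w i⌉₊ - 1
    have hc : ∀ i, w i - a i ∈ Set.Ioc 0 1 := fun i => sub_natCeil_sub_one_mem_Ioc (hw i)
    have hsum : ∑ i, (w i - a i) + ∑ i, (a i : ℝ) = t := by
      rw [← Finset.sum_add_distrib]
      simpa using hwt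
    have hat : ∑ i, a i ≤ t := by
      have := Finset.sum_nonneg fun i (_ : i ∈ Finset.univ) => (hc i).1.le
      exact_mod_cast (le_add_of_nonneg_left this).trans hsum.le
    refine ⟨fun i => w i - a i, ⟨hc, ⟨t - ∑ i, a i, ?_⟩, ?_⟩, a, hsum, ?_⟩
    · push_cast [hat]
      linarith
    · simp_rw [sub_smul, Finset.sum_sub_distrib]
      exact L.sub_mem hwL (sum_natCast_smul_mem hvL a)
    · ext i
      simp
  · rintro ⟨c, ⟨hc, -, hcL⟩, a, ha, rfl⟩
    refine ⟨fun i => add_pos_of_pos_of_nonneg (hc i).1 (Nat.cast_nonneg _), ?_, ?_⟩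
    · simpa [Finset.sum_add_distrib] using ha
    · simp_rw [Pi.add_apply, add_smul, Finset.sum_add_distrib]
      exact L.add_mem hcL (sum_natCast_smul_mem hvL a)

theorem pairwiseDisjoint_natTranslates (v : ι → E) (t : ℝ) :
    (fractionalWeights L v).PairwiseDisjoint (natTranslates · t) := by
  rintro c ⟨hc, -⟩ c' ⟨hc', -⟩ hne
  refine Set.disjoint_left.2 ?_
  rintro _ ⟨a, -, rfl⟩ ⟨a', -, ha'⟩
  have haa' : a = a' := funext fun i => by
    have := congrFun ha' i
    simp only [Pi.add_apply] at this
    simpa [Nat.ceil_add_natCast_of_mem_Ioc (hc i), Nat.ceil_add_natCast_of_mem_Ioc (hc' i)]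
      using congrArg (⌈·⌉₊) this.symm
  subst haa'
  exact hne (add_left_injective _ ha').symm

theorem natTranslates_eq_image {c : ι → ℝ} {h t : ℕ} (hc : ∑ i, c i = h) (hht : h ≤ t) :
    natTranslates c t = (fun a : ι → ℕ => c + fun i => (a i : ℝ)) '' {a | ∑ i, a i = t - h} := by
  rw [natTranslates]
  congr 1
  ext a
  simp only [Set.mem_ofPred_eq]
  rw [hc, ← Nat.cast_sum, ← Nat.cast_add, Nat.cast_inj]
  omega

theorem ncard_natTranslates {c : ι → ℝ} {h t : ℕ} (hc : ∑ i, c i = h)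
    (hht : h ≤ t) : (natTranslates c t).ncard = (Fintype.card ι).multichoose (t - h) := by
  rw [natTranslates_eq_image hc hht, Set.ncard_image_of_injective _
    fun a b hab => funext fun i => by simpa using congrFun hab i, ncard_setOf_sum_eq]

theorem finite_natTranslates {c : ι → ℝ} {h t : ℕ} (hc : ∑ i, c i = h)
    (hht : h ≤ t) : (natTranslates c t).Finite := by
  rw [natTranslates_eq_image hc hht]
  exact (finite_setOf_sum_eq _).image _

theorem sum_lt_card_of_ne_one {c : ι → ℝ} (hc : ∀ i, c i ∈ Set.Ioc 0 1) (hne : c ≠ 1) :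
    ∑ i, c i < Fintype.card ι := by
  obtain ⟨i, hi⟩ := Function.ne_iff.1 hne
  simpa using Finset.sum_lt_sum (fun i _ => (hc i).2) ⟨i, Finset.mem_univ i, (hc i).2.lt_of_ne hi⟩

theorem exists_sum_eq_natCast_of_mem_fractionalWeights [Nonempty ι] {c : ι → ℝ}
    (hc : c ∈ fractionalWeights L v) : ∃ h : ℕ, 0 < h ∧ h ≤ Fintype.card ι ∧ ∑ i, c i = h := by
  obtain ⟨hc, ⟨h, hh⟩, -⟩ := hc
  have hpos : 0 < ∑ i, c i := Finset.sum_pos (fun i _ => (hc i).1) Finset.univ_nonempty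
  have hle : ∑ i, c i ≤ Fintype.card ι := by
    simpa using Finset.sum_le_card_nsmul Finset.univ c 1 fun i _ => (hc i).2
  rw [hh] at hpos hle
  exact ⟨h, mod_cast hpos, mod_cast hle, hh⟩

end Weights

section Lattice

theorem Submodule.finite_inter_of_isBounded {E : Type*} [NormedAddCommGroup E] [ProperSpace E]
    {L : Submodule ℤ E} [DiscreteTopology L] {s : Set E} (hs : Bornology.IsBounded s) :
    (s ∩ L).Finite :=
  Metric.finite_isBounded_inter_isClosed DiscreteTopology.isDiscrete hs
    (L.coe_toAddSubgroup ▸ AddSubgroup.isClosed_of_discrete)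

variable {ι : Type*} [Fintype ι] {E : Type*} [NormedAddCommGroup E] [NormedSpace ℝ E]
  [ProperSpace E] {L : Submodule ℤ E} [DiscreteTopology L] {v : ι → E}

theorem finite_dilatedOpenSimplex_inter {t : ℝ} (ht : 0 < t) :
    (dilatedOpenSimplex v t ∩ L).Finite :=
  Submodule.finite_inter_of_isBounded <|
    ((isBounded_convexHull.2 (Set.finite_range v).isBounded).smul₀ t).subset
      (dilatedOpenSimplex_subset_smul_convexHull v ht)

theorem finite_fractionalWeights (hv : AffineIndependent ℝ v) :
    (fractionalWeights L v).Finite := by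
  have hB : ((Metric.closedBall (0 : E) (∑ i, ‖v i‖) ∩ L) ×ˢ
      ((Nat.cast : ℕ → ℝ) '' Set.Iic (Fintype.card ι))).Finite :=
    (Submodule.finite_inter_of_isBounded Metric.isBounded_closedBall).prod
      ((Set.finite_Iic _).image _)
  refine Set.Finite.of_finite_image (f := fun c => (∑ i, c i • v i, ∑ i, c i)) (hB.subset ?_) ?_
  · rintro _ ⟨c, ⟨hc, ⟨h, hh⟩, hcL⟩, rfl⟩
    have hnorm : ‖∑ i, c i • v i‖ ≤ ∑ i, ‖v i‖ :=
      (norm_sum_le _ _).trans <| Finset.sum_le_sum fun i _ => by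
        rw [norm_smul, Real.norm_of_nonneg (hc i).1.le]
        exact mul_le_of_le_one_left (norm_nonneg _) (hc i).2
    have hle : ∑ i, c i ≤ Fintype.card ι := by
      simpa using Finset.sum_le_card_nsmul Finset.univ c 1 fun i _ => (hc i).2
    exact ⟨⟨mem_closedBall_zero_iff.2 hnorm, hcL⟩, h, by exact_mod_cast hh ▸ hle, hh.symm⟩
  · rintro c - c' - hcc'
    simp only [Prod.mk.injEq] at hcc'
    exact funext fun i => hv.eq_of_sum_eq_sum hcc'.2 hcc'.1 i (Finset.mem_univ i)

theorem cast_ncard_dilatedOpenSimplex_inter [Nonempty ι] (hv : AffineIndependent ℝ v)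
    (hvL : ∀ i, v i ∈ L) {n t : ℕ} (ht : t ≠ 0) (hnt : n * (Fintype.card ι)! ∣ t) :
    ((dilatedOpenSimplex v t ∩ L).ncard : ZMod n) = (-1) ^ (Fintype.card ι - 1) := by
  have hQ := finite_fractionalWeights (L := L) hv
  have hmt := Nat.le_of_mul_factorial_dvd ht hnt
  have hone : (1 : ι → ℝ) ∈ fractionalWeights L v :=
    ⟨fun _ => ⟨one_pos, le_rfl⟩, ⟨Fintype.card ι, by simp⟩,
      by simpa using L.sum_mem fun i _ => hvL i⟩
  rw [ncard_dilatedOpenSimplex_inter hv, latticeWeights_eq_biUnion hvL, Set.ncard_biUnion hQ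
    (fun c hc => by
      obtain ⟨h, -, hh, hch⟩ := exists_sum_eq_natCast_of_mem_fractionalWeights hc
      exact finite_natTranslates hch (hh.trans hmt))
    (pairwiseDisjoint_natTranslates v t), Nat.cast_sum,
    Finset.sum_eq_single_of_mem 1 (hQ.mem_toFinset.2 hone)]
  · rw [ncard_natTranslates (h := Fintype.card ι) (by simp) hmt]
    exact Nat.cast_multichoose_sub_self ht hnt Fintype.card_pos
  · intro c hc hne
    obtain ⟨h, h0, -, hch⟩ := exists_sum_eq_natCast_of_mem_fractionalWeights (hQ.mem_toFinset.1 hc)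
    have hlt : h < Fintype.card ι := by
      exact_mod_cast hch ▸ sum_lt_card_of_ne_one (hQ.mem_toFinset.1 hc).1 hne
    rw [ncard_natTranslates hch (hlt.le.trans hmt)]
    exact Nat.cast_multichoose_sub_of_lt ht hnt h0 hlt

theorem Geometry.SimplicialComplex.cast_ncard_smul_space_inter (K : SimplicialComplex ℝ E)
    (hfin : K.faces.Finite) (hKL : ∀ s ∈ K.faces, ∀ x ∈ s, x ∈ L) {n t : ℕ} (ht : t ≠ 0)
    (hnt : ∀ s ∈ K.faces, n * s.card ! ∣ t) :
    (((t : ℝ) • K.space ∩ L).ncard : ZMod n) = ∑ s ∈ hfin.toFinset, (-1) ^ (s.card - 1) := by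
  have htpos : (0 : ℝ) < t := by positivity
  rw [K.smul_space_eq_biUnion htpos, Set.iUnion₂_inter, Set.ncard_biUnion hfin
    (fun s _ => finite_dilatedOpenSimplex_inter htpos)
    ((K.pairwiseDisjoint_dilatedOpenSimplex htpos).mono fun s => Set.inter_subset_left),
    Nat.cast_sum]
  refine Finset.sum_congr rfl fun s hs => ?_
  rw [hfin.mem_toFinset] at hs
  have : Nonempty s := (K.nonempty_of_mem_faces hs).to_subtype
  simpa using cast_ncard_dilatedOpenSimplex_inter (K.indep hs) (fun x => hKL s hs x x.2) ht
    (by simpa using hnt s hs)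

end Lattice

theorem Geometry.SimplicialComplex.card_le_finrank_add_one {E : Type*} [AddCommGroup E]
    [Module ℝ E] [FiniteDimensional ℝ E] (K : SimplicialComplex ℝ E) {s : Finset E}
    (hs : s ∈ K.faces) : s.card ≤ Module.finrank ℝ E + 1 := by
  simpa using (K.indep hs).card_le_finrank_succ.trans
    (Nat.add_le_add_right (Submodule.finrank_le _) 1)

theorem range_intCast_eq_span_basisFun (ι : Type*) [Fintype ι] :
    Set.range (fun (x : ι → ℤ) i => (x i : ℝ)) =
      Submodule.span ℤ (Set.range (Pi.basisFun ℝ ι)) := by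
  ext y
  rw [SetLike.mem_coe, Module.Basis.mem_span_iff_repr_mem]
  simp only [Pi.basisFun_repr, algebraMap_int_eq]
  constructor
  · rintro ⟨x, rfl⟩ i
    exact ⟨x i, rfl⟩
  · intro hy
    choose x hx using hy
    exact ⟨x, funext hx⟩

theorem ncard_setOf_intCast_mem {ι : Type*} [Fintype ι] (S : Set (ι → ℝ)) :
    {x : ι → ℤ | (fun i => (x i : ℝ)) ∈ S}.ncard =
      (S ∩ Submodule.span ℤ (Set.range (Pi.basisFun ℝ ι))).ncard := by
  rw [← range_intCast_eq_span_basisFun, ← Set.ncard_preimage_of_injective_subset_range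
    (fun x y hxy => funext fun i => by exact_mod_cast congrFun hxy i) Set.inter_subset_right]
  congr 1
  ext x
  simp

theorem lattice_points_in_dilated_complex_eq_euler_char_mod_general
    (d n : ℕ) (hn : 1 < n) :
    ∃ t : ℕ, 1 ≤ t ∧
      ∀ (K : Geometry.SimplicialComplex ℝ (Fin d → ℝ)) (hfin : K.faces.Finite),
        (∀ s ∈ K.faces, ∀ x ∈ s, ∃ z : Fin d → ℤ, x = fun i => (z i : ℝ)) →
        (({x : Fin d → ℤ | (fun i => (x i : ℝ)) ∈ (t : ℝ) • K.space}.ncard : ℤ))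
          ≡ (∑ s ∈ hfin.toFinset, (-1 : ℤ) ^ (s.card - 1)) [ZMOD (n : ℤ)] := by
  have ht : n * (d + 1)! ≠ 0 := Nat.mul_ne_zero (by omega) (Nat.factorial_ne_zero _)
  refine ⟨n * (d + 1)!, Nat.one_le_iff_ne_zero.2 ht, fun K hfin hK => ?_⟩
  have hKL : ∀ s ∈ K.faces, ∀ x ∈ s, x ∈ Submodule.span ℤ (Set.range (Pi.basisFun ℝ (Fin d))) :=
    fun s hs x hx => by
      obtain ⟨z, rfl⟩ := hK s hs x hx
      exact (range_intCast_eq_span_basisFun _).subset ⟨z, rfl⟩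
  have hcard : ∀ s ∈ K.faces, n * s.card ! ∣ n * (d + 1)! := fun s hs =>
    Nat.mul_dvd_mul_left n <| Nat.factorial_dvd_factorial <| by
      simpa using K.card_le_finrank_add_one hs
  rw [← ZMod.intCast_eq_intCast_iff, Int.cast_natCast, ncard_setOf_intCast_mem,
    K.cast_ncard_smul_space_inter hfin hKL ht hcard]
  simp

/-- **Akopyan–Tagami, main theorem.**
For any natural numbers `d ≥ 1` and `n > 1` there exists a natural number `t ≥ 1` such
that for every finite simplicial complex `K` in `ℝ^d` all of whose vertices lie in `ℤ^d`,
the number of lattice points in the dilate `t • |K|` of the underlying polyhedron is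
congruent to the Euler characteristic of `K` modulo `n`. -/
theorem lattice_points_in_dilated_complex_eq_euler_char_mod
    (d n : ℕ) (hd : 1 ≤ d) (hn : 1 < n) :
    ∃ t : ℕ, 1 ≤ t ∧
      ∀ (K : Geometry.SimplicialComplex ℝ (Fin d → ℝ)) (hfin : K.faces.Finite),
        (∀ s ∈ K.faces, ∀ x ∈ s, ∃ z : Fin d → ℤ, x = fun i => (z i : ℝ)) →
        (({x : Fin d → ℤ | (fun i => (x i : ℝ)) ∈ (t : ℝ) • K.space}.ncard : ℤ))
          ≡ (∑ s ∈ hfin.toFinset, (-1 : ℤ) ^ (s.card - 1)) [ZMOD (n : ℤ)] :=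
  lattice_points_in_dilated_complex_eq_euler_char_mod_general d n hn
end

section
/- Let P be a convex polytope in ℝ^d with all vertices in the integer lattice ℤ^d, let p be a prime number, and set l = ⌊log_p d⌋. Then for every natural number k > l, the number of points of ℤ^d contained in the dilated polytope p^k·P is congruent to 1 modulo p^(k−l). -/
/-!
Lift the vertices `vᵢ` of `P` to `(vᵢ, 1)`. A lattice point `x ∈ t • P` is `∑ μᵢ vᵢ` with `μ ≥ 0`
and `∑ μᵢ = t`; among these representations take the lexicographically largest one. Its
lex-maximality only depends on its support, which is then a "cell": the lifted vertices it indexes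
are linearly independent, so it has at most `d + 1` elements, and cells are closed under removing
any vertex and under adding the first one.

Writing `μ = β + m` with `m` integral and `βᵢ ∈ (0, 1]` on the support identifies the lattice
points of `t • P` with pairs of a box point `β` (of height `j` and support of size `e`) and a
multiset of size `t - j` on the support of `β`. Hence the count is `∑_β multichoose e (t - j)`.
For `t = p ^ k` each term is `C(p ^ k - 1 + (e - j), e - 1)`, which vanishes modulo `p ^ (k - l)`
unless `j = e`, because `p ^ (k - l)` divides `C(p ^ k, i)` for `0 < i ≤ d`. The box points with
`j = e` are the indicators of the nonempty cells `T`, contributing `(-1) ^ (|T| - 1)`, and toggling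
the first vertex shows that these signs add up to `1`.
-/

open Finset Function Filter Topology
open scoped Pointwise

section LexOrder

variable {n : ℕ}

lemma toLex_nonpos_of_smul_nonpos {s : ℝ} (hs : 0 < s) {δ : Fin n → ℝ}
    (h : toLex (s • δ) ≤ 0) : toLex δ ≤ 0 := by
  refine not_lt.mp fun ⟨i, hlt, hi⟩ => not_lt.mpr h ⟨i, fun j hj => ?_, mul_pos hs hi⟩
  have hδ : (0 : ℝ) = δ j := hlt j hj
  show (0 : ℝ) = s * δ j
  rw [← hδ, mul_zero]

lemma toLex_neg_of_apply_neg {δ : Fin n → ℝ} {i : Fin n} (hi : ∀ j, i ≤ j) (h : δ i < 0) :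
    toLex δ < 0 :=
  ⟨i, fun j hj => absurd (hi j) (not_le.mpr hj), h⟩

lemma toLex_cons_le_cons {a b : ℝ} {x y : Fin n → ℝ} (h : a < b ∨ a = b ∧ toLex x ≤ toLex y) :
    toLex (Fin.cons a x : Fin (n + 1) → ℝ) ≤ toLex (Fin.cons b y) := by
  rcases h with h | ⟨rfl, h | h⟩
  · exact le_of_lt ((Fin.pi_lex_lt_cons_cons (· < ·)).mpr (Or.inl h))
  · rw [toLex_inj.mp h]
  · exact le_of_lt ((Fin.pi_lex_lt_cons_cons (· < ·)).mpr (Or.inr ⟨rfl, h⟩))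

theorem IsCompact.exists_forall_toLex_le {K : Set (Fin n → ℝ)} (hK : IsCompact K)
    (hne : K.Nonempty) : ∃ μ ∈ K, ∀ ν ∈ K, toLex ν ≤ toLex μ := by
  induction n with
  | zero =>
    obtain ⟨μ, hμ⟩ := hne
    exact ⟨μ, hμ, fun ν _ => (congrArg toLex (Subsingleton.elim ν μ)).le⟩
  | succ n ih =>
    obtain ⟨μ, hμK, hμmax⟩ := hK.exists_isMaxOn hne (continuous_apply 0).continuousOn
    have hK' : IsCompact (Fin.tail '' (K ∩ {ν | ν 0 = μ 0})) :=
      (hK.inter_right (isClosed_eq (continuous_apply 0) continuous_const)).image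
        (continuous_pi fun i => continuous_apply _)
    obtain ⟨_, ⟨ρ, ⟨hρK, hρ0⟩, rfl⟩, hρmax⟩ := ih hK' ⟨_, ⟨μ, ⟨hμK, rfl⟩, rfl⟩⟩
    refine ⟨ρ, hρK, fun ν hν => ?_⟩
    rw [← Fin.cons_self_tail ν, ← Fin.cons_self_tail ρ]
    refine toLex_cons_le_cons ((hμmax hν : ν 0 ≤ μ 0).lt_or_eq.imp (·.trans_eq hρ0.symm) ?_)
    exact fun h => ⟨h.trans hρ0.symm, hρmax _ ⟨ν, ⟨hν, h⟩, rfl⟩⟩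

end LexOrder

lemma exists_pos_nonneg_add_smul {ι : Type*} [Finite ι] {μ δ : ι → ℝ} (hμ : 0 ≤ μ)
    (hδ : ∀ i ∉ support μ, 0 ≤ δ i) : ∃ s : ℝ, 0 < s ∧ 0 ≤ μ + s • δ := by
  have : ∀ᶠ s in 𝓝[>] (0 : ℝ), ∀ i, 0 ≤ μ i + s * δ i := by
    refine eventually_all.mpr fun i => ?_
    by_cases hi : μ i = 0
    · filter_upwards [self_mem_nhdsWithin] with s hs
      simpa [hi] using mul_nonneg (le_of_lt hs) (hδ i (notMem_support.mpr hi))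
    · have hlim : Tendsto (fun s : ℝ => μ i + s * δ i) (𝓝 0) (𝓝 (μ i)) := by
        have : Continuous fun s : ℝ => μ i + s * δ i := by fun_prop
        simpa using this.tendsto 0
      exact nhdsWithin_le_nhds ((hlim.eventually (lt_mem_nhds
        ((hμ i).lt_of_ne (Ne.symm hi)))).mono fun _ h => h.le)
  obtain ⟨s, hs, hs0⟩ := (this.and self_mem_nhdsWithin).exists
  exact ⟨s, hs0, fun i => by simpa using hs i⟩

section LexCell

variable {n : ℕ} {W : Type*} [AddCommGroup W] [Module ℝ W] (A : (Fin n → ℝ) →ₗ[ℝ] W)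

/-- For `μ ≥ 0`, `IsLexCell A (support μ)` holds exactly when `μ` is lexicographically largest
among the nonnegative vectors with the same image under `A`. -/
def IsLexCell (s : Set (Fin n)) : Prop :=
  ∀ δ, A δ = 0 → (∀ i ∉ s, 0 ≤ δ i) → toLex δ ≤ 0

variable {A}

lemma IsLexCell.mono {s t : Set (Fin n)} (ht : IsLexCell A t) (hst : s ⊆ t) : IsLexCell A s :=
  fun δ hδ hnonneg => ht δ hδ fun i hi => hnonneg i (mt (@hst i) hi)

lemma IsLexCell.insert {s : Set (Fin n)} (hs : IsLexCell A s) {i : Fin n} (hi : ∀ j, i ≤ j) :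
    IsLexCell A (insert i s) := by
  intro δ hδ hnonneg
  by_cases hδi : 0 ≤ δ i
  · refine hs δ hδ fun j hj => ?_
    obtain rfl | hji := eq_or_ne j i
    · exact hδi
    · exact hnonneg j (by simp [hji, hj])
  · exact (toLex_neg_of_apply_neg hi (not_le.mp hδi)).le

lemma IsLexCell.eq_zero {s : Set (Fin n)} (hs : IsLexCell A s) {δ : Fin n → ℝ} (hδ : A δ = 0)
    (hδs : ∀ i ∉ s, δ i = 0) : δ = 0 := by
  have h₁ := hs δ hδ fun i hi => (hδs i hi).ge
  have h₂ := hs (-δ) (by simp [hδ]) fun i hi => by simp [hδs i hi]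
  rw [toLex_neg, neg_nonpos] at h₂
  exact toLex_inj.mp (le_antisymm h₁ h₂)

lemma IsLexCell.eq_of_apply_eq {μ ν : Fin n → ℝ} (hμ : 0 ≤ μ) (hν : 0 ≤ ν)
    (hμc : IsLexCell A (support μ)) (hνc : IsLexCell A (support ν)) (h : A μ = A ν) : μ = ν := by
  have key : ∀ {μ ν : Fin n → ℝ}, 0 ≤ ν → IsLexCell A (support μ) → A μ = A ν →
      toLex ν ≤ toLex μ := fun {μ ν} hν hμc h => by
    have := hμc (ν - μ) (by simp [h]) fun i hi => by simpa [notMem_support.mp hi] using hν i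
    rwa [toLex_sub, sub_nonpos] at this
  exact toLex_inj.mp (le_antisymm (key hμ hνc h.symm) (key hν hμc h))

lemma IsLexCell.card_le_finrank [FiniteDimensional ℝ W] {s : Finset (Fin n)}
    (hs : IsLexCell A s) : #s ≤ Module.finrank ℝ W := by
  classical
  have hli : LinearIndependent ℝ fun i : s => A (Pi.single (i : Fin n) (1 : ℝ)) := by
    refine Fintype.linearIndependent_iff.mpr fun g hg => ?_
    let δ : Fin n → ℝ := ∑ i : s, g i • Pi.single (i : Fin n) (1 : ℝ)
    have hδ : δ = 0 := hs.eq_zero (by simpa [δ, map_sum] using hg) fun j hj => by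
      simp only [δ, Finset.sum_apply, Pi.smul_apply, Pi.single_apply, smul_eq_mul, mul_ite,
        mul_one, mul_zero]
      exact Finset.sum_eq_zero fun i _ => if_neg fun h : j = i => hj (h ▸ i.2)
    intro i
    simpa [δ, Finset.sum_apply, Pi.single_apply] using congrFun hδ i
  simpa using hli.fintype_card_le_finrank

theorem exists_isLexCell_support {μ₀ : Fin n → ℝ} (h₀ : 0 ≤ μ₀)
    (hK : IsCompact {ν | 0 ≤ ν ∧ A ν = A μ₀}) :
    ∃ μ, 0 ≤ μ ∧ IsLexCell A (support μ) ∧ A μ = A μ₀ := by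
  obtain ⟨μ, ⟨hμ, hAμ⟩, hmax⟩ := hK.exists_forall_toLex_le ⟨μ₀, h₀, rfl⟩
  refine ⟨μ, hμ, fun δ hδ hδs => ?_, hAμ⟩
  obtain ⟨s, hs, hsδ⟩ := exists_pos_nonneg_add_smul hμ hδs
  have := hmax (μ + s • δ) ⟨hsδ, by rw [map_add, map_smul, hδ, smul_zero, add_zero, hAμ]⟩
  rw [toLex_add, add_le_iff_nonpos_right] at this
  exact toLex_nonpos_of_smul_nonpos hs this

end LexCell

section Cone

variable {n : ℕ} {E : Type*} [AddCommGroup E] [Module ℝ E]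

def coneMap (u : Fin n → E) : (Fin n → ℝ) →ₗ[ℝ] E × ℝ :=
  Fintype.linearCombination ℝ fun i => (u i, 1)

lemma coneMap_apply (u : Fin n → E) (μ : Fin n → ℝ) :
    coneMap u μ = (∑ i, μ i • u i, ∑ i, μ i) := by
  simp [coneMap, Fintype.linearCombination_apply, Prod.ext_iff, Prod.fst_sum, Prod.snd_sum]

lemma convexHull_range_eq_image_stdSimplex (u : Fin n → E) :
    convexHull ℝ (Set.range u) = Fintype.linearCombination ℝ u '' stdSimplex ℝ (Fin n) := by
  classical
  rw [← convexHull_rangle_single_eq_stdSimplex, LinearMap.image_convexHull, ← Set.range_comp]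
  congr 2 with i
  simp

lemma mem_smul_convexHull_range_iff (u : Fin n → E) {t : ℝ} (ht : 0 < t) {y : E} :
    y ∈ t • convexHull ℝ (Set.range u) ↔ ∃ μ, 0 ≤ μ ∧ coneMap u μ = (y, t) := by
  simp only [convexHull_range_eq_image_stdSimplex, Set.mem_smul_set, Set.mem_image,
    coneMap_apply, Prod.mk.injEq, Fintype.linearCombination_apply]
  constructor
  · rintro ⟨_, ⟨w, ⟨hw0, hw1⟩, rfl⟩, rfl⟩
    refine ⟨t • w, fun i => mul_nonneg ht.le (hw0 i), ?_, ?_⟩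
    · simp [Finset.smul_sum, smul_smul]
    · simp [← Finset.mul_sum, hw1]
  · rintro ⟨μ, hμ, rfl, hμt⟩
    refine ⟨_, ⟨t⁻¹ • μ, ⟨fun i => mul_nonneg (inv_nonneg.mpr ht.le) (hμ i), ?_⟩, rfl⟩, ?_⟩
    · simp [← Finset.mul_sum, hμt, ht.ne']
    · simp [Finset.smul_sum, smul_smul, ht.ne']

lemma isLexCell_coneMap_empty (u : Fin n → E) : IsLexCell (coneMap u) ∅ := by
  intro δ hδ hδ0
  have hsum : ∑ i, δ i = 0 := by simpa [coneMap_apply] using congrArg Prod.snd hδ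
  have : δ = 0 := funext fun i =>
    (sum_eq_zero_iff_of_nonneg fun i _ => hδ0 i (Set.notMem_empty i)).mp hsum i (mem_univ i)
  rw [this, toLex_zero]

end Cone

lemma isCompact_coneMap_fiber {n : ℕ} {E : Type*} [NormedAddCommGroup E] [NormedSpace ℝ E]
    (u : Fin n → E) (w : E × ℝ) : IsCompact {ν | 0 ≤ ν ∧ coneMap u ν = w} := by
  refine (isCompact_Icc (a := 0) (b := fun _ => w.2)).of_isClosed_subset
    ((isClosed_le continuous_const continuous_id).inter
      (isClosed_eq (coneMap u).continuous_of_finiteDimensional continuous_const)) ?_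
  rintro ν ⟨hν, rfl⟩
  refine ⟨hν, fun i => ?_⟩
  simpa [coneMap_apply] using Finset.single_le_sum (fun j _ => hν j) (Finset.mem_univ i)

section Combinatorics

lemma Finset.sum_neg_one_pow_card_eq_zero {ι R : Type*} [DecidableEq ι] [Ring R]
    {𝒜 : Finset (Finset ι)} (a : ι) (herase : ∀ T ∈ 𝒜, T.erase a ∈ 𝒜)
    (hinsert : ∀ T ∈ 𝒜, insert a T ∈ 𝒜) : ∑ T ∈ 𝒜, (-1 : R) ^ #T = 0 := by
  let toggle (T : Finset ι) : Finset ι := if a ∈ T then T.erase a else insert a T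
  refine sum_involution (fun T _ => toggle T) (fun T _ => ?_) (fun T _ _ => ?_)
    (fun T hT => ?_) (fun T _ => ?_)
  · by_cases h : a ∈ T
    · rw [← card_erase_add_one h]
      simp [toggle, h, pow_succ]
    · simp [toggle, h, card_insert_of_notMem h, pow_succ]
  · by_cases h : a ∈ T <;> simp [toggle, h]
  · by_cases h : a ∈ T <;> simp [toggle, h, herase, hinsert, hT]
  · by_cases h : a ∈ T <;> simp [toggle, h]

lemma Finset.card_piAntidiag_nat {ι : Type*} [DecidableEq ι] (s : Finset ι) (k : ℕ) :
    #(piAntidiag s k) = (#s).multichoose k := by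
  rw [← card_finsuppAntidiag_nat_eq_multichoose, finsuppAntidiag, card_map, card_attach]

open scoped Classical in
lemma Fintype.sum_eq_sum_toFinset_support {ι M : Type*} [Fintype ι] [AddCommMonoid M]
    (f : ι → M) : ∑ i, f i = ∑ i ∈ (support f).toFinset, f i :=
  (Finset.sum_subset (subset_univ _) fun i _ hi => by simpa using hi).symm

lemma abs_sum_mul_le_sum_abs {ι : Type*} [Fintype ι] {β : ι → ℝ} (hβ0 : 0 ≤ β) (hβ1 : β ≤ 1)
    (a : ι → ℝ) : |∑ i, β i * a i| ≤ ∑ i, |a i| := by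
  refine (abs_sum_le_sum_abs _ _).trans (sum_le_sum fun i _ => ?_)
  rw [abs_mul, abs_of_nonneg (hβ0 i)]
  exact mul_le_of_le_one_left (abs_nonneg _) (hβ1 i)

end Combinatorics

section Binomial

open Nat

variable {p D k : ℕ}

lemma le_prime_pow_of_log_lt (hp : p.Prime) (hk : log p D < k) : D < p ^ k :=
  (lt_pow_succ_log_self hp.one_lt D).trans_le (Nat.pow_le_pow_right hp.pos hk)

lemma prime_pow_sub_log_dvd_choose (hp : p.Prime) (hk : log p D < k) {i : ℕ} (hi : i ≠ 0)
    (hiD : i ≤ D) : p ^ (k - log p D) ∣ (p ^ k).choose i := by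
  have hv : i.factorization p ≤ log p D :=
    (le_log_of_pow_le hp.one_lt (ordProj_le p hi)).trans (log_mono_right hiD)
  have hik : i ≤ p ^ k := hiD.trans (le_prime_pow_of_log_lt hp hk).le
  refine (Nat.pow_dvd_pow p (by omega : k - log p D ≤ k - i.factorization p)).trans ?_
  rw [← factorization_choose_prime_pow hp hik hi]
  exact ordProj_dvd _ p

variable (hp : p.Prime) (hk : log p D < k)
include hp hk

lemma choose_prime_pow_eq_zero {i : ℕ} (hi : i ≠ 0) (hiD : i ≤ D) :
    ((p ^ k).choose i : ZMod (p ^ (k - log p D))) = 0 :=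
  (ZMod.natCast_eq_zero_iff _ _).mpr (prime_pow_sub_log_dvd_choose hp hk hi hiD)

lemma choose_prime_pow_add (a : ℕ) {s : ℕ} (hs : s ≤ D) :
    ((p ^ k + a).choose s : ZMod (p ^ (k - log p D))) = a.choose s := by
  rw [add_choose_eq, Nat.cast_sum, Finset.sum_eq_single (0, s)]
  · simp
  · rintro ⟨i, j⟩ hij hne
    have hi : i ≠ 0 := by
      rintro rfl
      exact hne (by simpa using mem_antidiagonal.mp hij)
    have hiD : i ≤ D := le_trans (by simpa using Nat.le.intro (mem_antidiagonal.mp hij)) hs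
    simp [choose_prime_pow_eq_zero hp hk hi hiD]
  · simp

lemma choose_prime_pow_sub_one {s : ℕ} (hs : s ≤ D) :
    ((p ^ k - 1).choose s : ZMod (p ^ (k - log p D))) = (-1) ^ s := by
  induction s with
  | zero => simp
  | succ s ih =>
    have hpk : p ^ k - 1 + 1 = p ^ k := Nat.sub_add_cancel (Nat.one_le_pow _ _ hp.pos)
    have pascal := congrArg (Nat.cast : ℕ → ZMod (p ^ (k - log p D)))
      (choose_succ_succ' (p ^ k - 1) s)
    rw [hpk, choose_prime_pow_eq_zero hp hk s.succ_ne_zero hs, Nat.cast_add,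
      ih (by omega)] at pascal
    rw [pow_succ]
    linear_combination -pascal

lemma multichoose_prime_pow_sub {j e : ℕ} (hj : j ≠ 0) (hje : j ≤ e) (he : e ≤ D + 1) :
    (e.multichoose (p ^ k - j) : ZMod (p ^ (k - log p D))) = if j = e then -(-1) ^ e else 0 := by
  have hjk : j ≤ p ^ k := by have := le_prime_pow_of_log_lt hp hk; omega
  rw [multichoose_eq, choose_symm_of_eq_add (by omega : e + (p ^ k - j) - 1 = p ^ k - j + (e - 1))]
  split_ifs with h
  · subst h
    obtain ⟨s, rfl⟩ := Nat.exists_eq_succ_of_ne_zero hj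
    rw [show s.succ + (p ^ k - s.succ) - 1 = p ^ k - 1 by omega, Nat.succ_sub_one,
      choose_prime_pow_sub_one hp hk (by omega), pow_succ]
    ring
  · rw [show e + (p ^ k - j) - 1 = p ^ k + (e - j - 1) by omega,
      choose_prime_pow_add hp hk _ (by omega), choose_eq_zero_of_lt (by omega), Nat.cast_zero]

end Binomial

section CeilPred

lemma natCast_ceil_sub_one_le {a : ℝ} (ha : 0 ≤ a) : ((⌈a⌉₊ - 1 : ℕ) : ℝ) ≤ a := by
  rcases ha.eq_or_lt with rfl | ha
  · simp
  · rw [Nat.cast_sub (Nat.one_le_iff_ne_zero.mpr (Nat.ceil_pos.mpr ha).ne'), Nat.cast_one]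
    linarith [Nat.ceil_lt_add_one ha.le]

lemma sub_natCast_ceil_sub_one_le_one (a : ℝ) : a - ((⌈a⌉₊ - 1 : ℕ) : ℝ) ≤ 1 := by
  have := Nat.le_ceil a
  have : (⌈a⌉₊ : ℝ) - 1 ≤ ((⌈a⌉₊ - 1 : ℕ) : ℝ) := by
    rcases Nat.eq_zero_or_pos ⌈a⌉₊ with h | h
    · simp [h]
    · rw [Nat.cast_sub h, Nat.cast_one]
  linarith

lemma sub_natCast_ceil_sub_one_pos {a : ℝ} (ha : 0 < a) : 0 < a - ((⌈a⌉₊ - 1 : ℕ) : ℝ) := by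
  rw [Nat.cast_sub (Nat.one_le_iff_ne_zero.mpr (Nat.ceil_pos.mpr ha).ne'), Nat.cast_one]
  linarith [Nat.ceil_lt_add_one ha.le]

lemma ceil_add_natCast_sub_one {b : ℝ} (hb0 : 0 ≤ b) (hb1 : b ≤ 1) {m : ℕ}
    (hm : m ≠ 0 → b ≠ 0) : ⌈b + m⌉₊ - 1 = m := by
  rcases hb0.eq_or_lt with rfl | hb0
  · by_cases h : m = 0 <;> simp_all
  · have : ⌈b⌉₊ = 1 := le_antisymm (Nat.ceil_le.mpr (by simpa using hb1)) (Nat.ceil_pos.mpr hb0)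
    rw [Nat.ceil_add_natCast hb0.le, this, add_tsub_cancel_left]

variable {ι : Type*}

/-- The integer part in the splitting `μ i = (μ i - ceilPred μ i) + ceilPred μ i` whose first
summand lies in `(0, 1]` when `μ i > 0`; truncated subtraction makes it `0` when `μ i = 0`. -/
noncomputable def ceilPred (μ : ι → ℝ) (i : ι) : ℕ := ⌈μ i⌉₊ - 1

lemma support_sub_ceilPred {μ : ι → ℝ} (hμ : 0 ≤ μ) :
    support (μ - fun i => (ceilPred μ i : ℝ)) = support μ := by
  ext i
  rcases (hμ i).eq_or_lt with h | h
  · simp [ceilPred, ← h]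
  · have : μ i ≠ 0 := h.ne'
    simp [this, (sub_natCast_ceil_sub_one_pos h).ne', ceilPred]

lemma support_add_natCast {β : ι → ℝ} (hβ : 0 ≤ β) {m : ι → ℕ}
    (hm : ∀ i, m i ≠ 0 → β i ≠ 0) : support (β + fun i => (m i : ℝ)) = support β := by
  ext i
  by_cases hmi : m i = 0
  · simp [hmi]
  · have hβi : (0 : ℝ) < β i := (hβ i).lt_of_ne (hm i hmi).symm
    have : 0 < β i + m i := by positivity
    simp only [mem_support, Pi.add_apply]
    exact iff_of_true this.ne' (hm i hmi)

end CeilPred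

section CanonicalRep

open scoped Classical

variable {n d : ℕ} (v : Fin n → Fin d → ℤ)

abbrev intConeMap : (Fin n → ℝ) →ₗ[ℝ] (Fin d → ℝ) × ℝ := coneMap fun i j => (v i j : ℝ)

def IsCanonicalRep (t : ℕ) (μ : Fin n → ℝ) : Prop :=
  0 ≤ μ ∧ IsLexCell (intConeMap v) (support μ) ∧
    ∃ x : Fin d → ℤ, intConeMap v μ = (fun j => (x j : ℝ), (t : ℝ))

variable {v}

lemma intConeMap_natCast (m : Fin n → ℕ) :
    intConeMap v (fun i => (m i : ℝ)) =
      (fun j => ((∑ i, (m i : ℤ) * v i j : ℤ) : ℝ), ((∑ i, m i : ℕ) : ℝ)) := by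
  ext j <;> simp [coneMap_apply, Finset.sum_apply]

lemma IsCanonicalRep.sum_eq {t : ℕ} {μ : Fin n → ℝ} (h : IsCanonicalRep v t μ) :
    ∑ i, μ i = t := by
  obtain ⟨x, hx⟩ := h.2.2
  simpa [coneMap_apply] using congrArg Prod.snd hx

lemma IsCanonicalRep.floor_sum_eq {t : ℕ} {μ : Fin n → ℝ} (h : IsCanonicalRep v t μ) :
    ⌊∑ i, μ i⌋₊ = t := by
  rw [h.sum_eq, Nat.floor_natCast]

lemma IsCanonicalRep.eq {t t' : ℕ} {μ ν : Fin n → ℝ} (hμ : IsCanonicalRep v t μ)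
    (hν : IsCanonicalRep v t' ν) (h : intConeMap v μ = intConeMap v ν) : μ = ν :=
  hμ.2.1.eq_of_apply_eq hμ.1 hν.1 hν.2.1 h

lemma IsCanonicalRep.card_support_le {t : ℕ} {μ : Fin n → ℝ} (h : IsCanonicalRep v t μ) :
    #(support μ).toFinset ≤ d + 1 := by
  have := (h.2.1.mono (Set.coe_toFinset _).le).card_le_finrank
  simpa [Module.finrank_prod] using this

lemma IsCanonicalRep.add_natCast {j : ℕ} {β : Fin n → ℝ} (h : IsCanonicalRep v j β)
    {m : Fin n → ℕ} (hm : ∀ i, m i ≠ 0 → β i ≠ 0) :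
    IsCanonicalRep v (j + ∑ i, m i) (β + fun i => (m i : ℝ)) := by
  obtain ⟨hβ, hcell, x, hx⟩ := h
  refine ⟨add_nonneg hβ fun i => Nat.cast_nonneg _, (support_add_natCast hβ hm).symm ▸ hcell,
    x + fun c => ∑ i, (m i : ℤ) * v i c, ?_⟩
  rw [map_add, hx, intConeMap_natCast]
  ext c <;> simp

lemma IsCanonicalRep.sub_ceilPred {t : ℕ} {μ : Fin n → ℝ} (h : IsCanonicalRep v t μ) :
    ∑ i, ceilPred μ i ≤ t ∧
      IsCanonicalRep v (t - ∑ i, ceilPred μ i) (μ - fun i => (ceilPred μ i : ℝ)) := by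
  have hle : ∑ i, ceilPred μ i ≤ t := by
    have : ((∑ i, ceilPred μ i : ℕ) : ℝ) ≤ t := by
      rw [← h.sum_eq, Nat.cast_sum]
      exact sum_le_sum fun i _ => natCast_ceil_sub_one_le (h.1 i)
    exact_mod_cast this
  obtain ⟨hμ, hcell, x, hx⟩ := h
  refine ⟨hle, fun i => sub_nonneg.mpr (natCast_ceil_sub_one_le (hμ i)),
    (support_sub_ceilPred hμ).symm ▸ hcell, x - fun c => ∑ i, (ceilPred μ i : ℤ) * v i c, ?_⟩
  rw [map_sub, hx, intConeMap_natCast, Nat.cast_sub hle]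
  ext c <;> simp

lemma isCanonicalRep_indicator {T : Finset (Fin n)} (hT : IsLexCell (intConeMap v) ↑T) :
    IsCanonicalRep v #T ((T : Set (Fin n)).indicator 1) := by
  refine ⟨Set.indicator_nonneg fun _ _ => zero_le_one, by simpa using hT,
    fun c => ∑ i ∈ T, v i c, ?_⟩
  ext c <;> simp [coneMap_apply, Set.indicator_apply, Finset.sum_apply]

end CanonicalRep

section BoxPoints

open scoped Classical

variable {n d : ℕ} (v : Fin n → Fin d → ℤ)

def boxPoints : Set (Fin n → ℝ) := {β | β ≠ 0 ∧ β ≤ 1 ∧ ∃ j, IsCanonicalRep v j β}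

lemma boxPoints_finite : (boxPoints v).Finite := by
  let B : Fin d → ℤ := fun j => ∑ i, |v i j|
  let F := (fun p : (Fin d → ℤ) × ℕ => ((fun j => (p.1 j : ℝ)), (p.2 : ℝ))) ''
    (Set.Icc (-B) B ×ˢ Set.Iic n)
  have hF : F.Finite := ((Set.finite_Icc _ _).prod (Set.finite_Iic _)).image _
  refine Set.Finite.of_finite_image (hF.subset ?_)
    fun β hβ γ hγ h => hβ.2.2.choose_spec.eq hγ.2.2.choose_spec h
  rintro _ ⟨β, ⟨-, hβ1, j, hβ0, -, x, hx⟩, rfl⟩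
  simp only [coneMap_apply, Prod.mk.injEq, funext_iff, Finset.sum_apply, Pi.smul_apply,
    smul_eq_mul] at hx
  have hxB (c : Fin d) : |x c| ≤ B c := by
    have := abs_sum_mul_le_sum_abs hβ0 hβ1 fun i => (v i c : ℝ)
    rw [hx.1 c] at this
    exact_mod_cast this
  refine ⟨(x, j), ⟨⟨fun c => ?_, fun c => (abs_le.mp (hxB c)).2⟩, ?_⟩, ?_⟩
  · simpa using (abs_le.mp (hxB c)).1
  · have : (j : ℝ) ≤ n := by
      rw [← hx.2]
      simpa using sum_le_sum fun i (_ : i ∈ univ) => hβ1 i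
    exact_mod_cast this
  · simp [coneMap_apply, hx.1, hx.2, funext_iff, Finset.sum_apply]

noncomputable def boxDecomposition (t : ℕ) : Finset (Σ _ : Fin n → ℝ, Fin n → ℕ) :=
  (boxPoints_finite v).toFinset.sigma fun β => piAntidiag (support β).toFinset (t - ⌊∑ i, β i⌋₊)

variable {v}

lemma isCanonicalRep_of_mem_boxPoints {β : Fin n → ℝ} (hβ : β ∈ boxPoints v) :
    IsCanonicalRep v ⌊∑ i, β i⌋₊ β := by
  obtain ⟨-, -, j, hj⟩ := hβ
  rwa [hj.floor_sum_eq]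

lemma floor_sum_pos_of_mem_boxPoints {β : Fin n → ℝ} (hβ : β ∈ boxPoints v) :
    0 < ⌊∑ i, β i⌋₊ := by
  obtain ⟨i, hi⟩ := Function.ne_iff.mp hβ.1
  have hrep := isCanonicalRep_of_mem_boxPoints hβ
  have hpos : 0 < ∑ i, β i :=
    sum_pos' (fun i _ => hrep.1 i) ⟨i, mem_univ _, (hrep.1 i).lt_of_ne (Ne.symm hi)⟩
  rw [hrep.sum_eq] at hpos
  exact_mod_cast hpos

lemma floor_sum_le_card_support {β : Fin n → ℝ} (hβ1 : β ≤ 1) :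
    ⌊∑ i, β i⌋₊ ≤ #(support β).toFinset := by
  refine Nat.floor_le_of_le ?_
  rw [Fintype.sum_eq_sum_toFinset_support]
  simpa only [nsmul_eq_mul, mul_one] using
    sum_le_card_nsmul (support β).toFinset β 1 fun i _ => hβ1 i

lemma mem_boxDecomposition {t : ℕ} {z : Σ _ : Fin n → ℝ, Fin n → ℕ} :
    z ∈ boxDecomposition v t ↔ z.1 ∈ boxPoints v ∧ ∑ i, z.2 i = t - ⌊∑ i, z.1 i⌋₊ ∧
      ∀ i, z.2 i ≠ 0 → z.1 i ≠ 0 := by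
  simp only [boxDecomposition, mem_sigma, Set.Finite.mem_toFinset, mem_piAntidiag,
    Set.mem_toFinset, mem_support]
  refine and_congr_right fun _ => and_congr_left fun hm => ?_
  rw [sum_subset (subset_univ _) fun i _ hi => by_contra fun h => hi (by simpa using hm i h)]

lemma isCanonicalRep_iff_exists_mem_boxDecomposition {t : ℕ} (ht : d + 1 ≤ t) {μ : Fin n → ℝ} :
    IsCanonicalRep v t μ ↔ ∃ z ∈ boxDecomposition v t, z.1 + (fun i => (z.2 i : ℝ)) = μ := by
  constructor
  · intro h
    obtain ⟨hle, hβ⟩ := h.sub_ceilPred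
    have hsupp := support_sub_ceilPred h.1
    have hm (i) (hi : ceilPred μ i ≠ 0) : μ i ≠ 0 := fun h0 => hi (by simp [ceilPred, h0])
    refine ⟨⟨_, ceilPred μ⟩, mem_boxDecomposition.mpr ⟨⟨fun h0 => ?_, fun i => ?_, _, hβ⟩, ?_, ?_⟩,
      sub_add_cancel μ _⟩
    · dsimp only at h0
      rw [h0, support_zero, eq_comm, support_eq_empty_iff] at hsupp
      have : (t : ℝ) = 0 := by simpa [hsupp] using h.sum_eq.symm
      have : t = 0 := by exact_mod_cast this
      omega
    · exact sub_natCast_ceil_sub_one_le_one (μ i)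
    · dsimp only
      rw [hβ.floor_sum_eq]
      omega
    · intro i hi
      dsimp only at hi ⊢
      rw [← mem_support, hsupp]
      exact hm i hi
  · rintro ⟨⟨β, m⟩, hz, rfl⟩
    obtain ⟨hβ, hsum, hm⟩ := mem_boxDecomposition.mp hz
    have hrep := (isCanonicalRep_of_mem_boxPoints hβ).add_natCast hm
    have := (floor_sum_le_card_support hβ.2.1).trans
      (isCanonicalRep_of_mem_boxPoints hβ).card_support_le
    rwa [hsum, Nat.add_sub_cancel' (by omega)] at hrep

lemma injOn_boxDecomposition (t : ℕ) :
    Set.InjOn (fun z : Σ _ : Fin n → ℝ, Fin n → ℕ => z.1 + fun i => (z.2 i : ℝ))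
      (boxDecomposition v t) := by
  have hceil : ∀ z ∈ boxDecomposition v t, ∀ i, ⌈z.1 i + z.2 i⌉₊ - 1 = z.2 i := fun z hz i => by
    obtain ⟨hβ, -, hm⟩ := mem_boxDecomposition.mp hz
    exact ceil_add_natCast_sub_one ((isCanonicalRep_of_mem_boxPoints hβ).1 i) (hβ.2.1 i) (hm i)
  rintro ⟨β, m⟩ hz ⟨β', m'⟩ hz' h
  dsimp only at h
  have hm : m = m' := funext fun i => by
    have h₁ := hceil _ hz i
    have h₂ := hceil _ hz' i
    dsimp only at h₁ h₂
    rw [← h₁, ← h₂]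
    exact congrArg (fun μ => ⌈μ i⌉₊ - 1) h
  subst hm
  exact Sigma.ext (add_right_cancel h) HEq.rfl

lemma ncard_isCanonicalRep {t : ℕ} (ht : d + 1 ≤ t) :
    {μ | IsCanonicalRep v t μ}.ncard = ∑ β ∈ (boxPoints_finite v).toFinset,
      (#(support β).toFinset).multichoose (t - ⌊∑ i, β i⌋₊) := by
  have : {μ | IsCanonicalRep v t μ} =
      ((boxDecomposition v t).image fun z => z.1 + fun i => (z.2 i : ℝ) : Set (Fin n → ℝ)) := by
    ext μ
    simp [isCanonicalRep_iff_exists_mem_boxDecomposition ht]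
  rw [this, Set.ncard_coe_finset, card_image_of_injOn (injOn_boxDecomposition t),
    boxDecomposition, card_sigma]
  simp only [card_piAntidiag_nat]

end BoxPoints

section Cells

open scoped Classical

variable {n : ℕ}

noncomputable def lexCells {W : Type*} [AddCommGroup W] [Module ℝ W]
    (A : (Fin n → ℝ) →ₗ[ℝ] W) : Finset (Finset (Fin n)) :=
  univ.filter fun T => IsLexCell A ↑T

lemma sum_lexCells_neg_one_pow {W R : Type*} [AddCommGroup W] [Module ℝ W] [Ring R]
    (A : (Fin n → ℝ) →ₗ[ℝ] W) (hn : 0 < n) : ∑ T ∈ lexCells A, (-1 : R) ^ #T = 0 := by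
  refine sum_neg_one_pow_card_eq_zero ⟨0, hn⟩ (fun T hT => ?_) (fun T hT => ?_) <;>
    simp only [lexCells, mem_filter, mem_univ, true_and, coe_erase, coe_insert] at hT ⊢
  · exact hT.mono Set.sdiff_subset
  · exact hT.insert fun j => Nat.zero_le j

lemma eq_indicator_of_sum_eq_card {β : Fin n → ℝ} (h1 : β ≤ 1)
    (h : ∑ i, β i = #(support β).toFinset) : β = (support β).indicator 1 := by
  have hsum : ∑ i ∈ (support β).toFinset, (1 - β i) = 0 := by
    rw [sum_sub_distrib, ← Fintype.sum_eq_sum_toFinset_support, h]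
    simp
  funext i
  by_cases hi : i ∈ support β
  · have : (1 : ℝ) - β i = 0 :=
      (sum_eq_zero_iff_of_nonneg fun j _ => sub_nonneg.mpr (h1 j)).mp hsum i (by simpa using hi)
    rw [Set.indicator_of_mem hi, Pi.one_apply]
    linarith
  · rw [Set.indicator_of_notMem hi]
    exact notMem_support.mp hi

lemma sum_boxPoints_saturated {d : ℕ} {v : Fin n → Fin d → ℤ} {R : Type*} [AddCommMonoid R]
    (f : ℕ → R) :
    ∑ β ∈ (boxPoints_finite v).toFinset with ⌊∑ i, β i⌋₊ = #(support β).toFinset,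
        f #(support β).toFinset =
      ∑ T ∈ (lexCells (intConeMap v)).erase ∅, f #T := by
  refine sum_nbij' (fun β => (support β).toFinset) (fun T => (T : Set (Fin n)).indicator 1)
    (fun β hβ => ?_) (fun T hT => ?_) (fun β hβ => ?_) (fun T hT => ?_) (fun _ _ => rfl)
  · obtain ⟨hβ, -⟩ := mem_filter.mp hβ
    rw [Set.Finite.mem_toFinset] at hβ
    refine mem_erase.mpr ⟨fun h => hβ.1 ?_, mem_filter.mpr ⟨mem_univ _, ?_⟩⟩
    · rwa [Set.toFinset_eq_empty, support_eq_empty_iff] at h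
    · rw [Set.coe_toFinset]
      exact (isCanonicalRep_of_mem_boxPoints hβ).2.1
  · obtain ⟨hne, hT⟩ := mem_erase.mp hT
    have hrep := isCanonicalRep_indicator (mem_filter.mp hT).2
    obtain ⟨i, hi⟩ := nonempty_iff_ne_empty.mpr hne
    refine mem_filter.mpr ⟨(Set.Finite.mem_toFinset _).mpr ⟨fun h => ?_, fun j => ?_, _, hrep⟩, ?_⟩
    · simpa [hi] using congrFun h i
    · by_cases hj : j ∈ T <;> simp [hj]
    · simp [hrep.floor_sum_eq]
  · obtain ⟨hβ, hsat⟩ := mem_filter.mp hβ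
    rw [Set.Finite.mem_toFinset] at hβ
    rw [Set.coe_toFinset, ← eq_indicator_of_sum_eq_card hβ.2.1]
    rw [(isCanonicalRep_of_mem_boxPoints hβ).sum_eq, hsat]
  · simp

end Cells

section LatticePoints

open scoped Classical

variable {n d : ℕ} (v : Fin n → Fin d → ℤ)

lemma ncard_latticePoints_eq_ncard_isCanonicalRep {t : ℕ} (ht : 0 < t) :
    {x : Fin d → ℤ | (fun j => (x j : ℝ)) ∈
        (t : ℝ) • convexHull ℝ (Set.range fun i j => (v i j : ℝ))}.ncard =
      {μ | IsCanonicalRep v t μ}.ncard := by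
  have ht' : (0 : ℝ) < t := Nat.cast_pos.mpr ht
  have himage : (fun x : Fin d → ℤ => ((fun j => (x j : ℝ)), (t : ℝ))) ''
      {x | (fun j => (x j : ℝ)) ∈ (t : ℝ) • convexHull ℝ (Set.range fun i j => (v i j : ℝ))} =
      intConeMap v '' {μ | IsCanonicalRep v t μ} := by
    ext w
    constructor
    · rintro ⟨x, hx, rfl⟩
      obtain ⟨μ₀, hμ₀, hA⟩ := (mem_smul_convexHull_range_iff _ ht').mp hx
      obtain ⟨μ, hμ, hcell, hAμ⟩ := exists_isLexCell_support hμ₀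
        (isCompact_coneMap_fiber (fun i j => (v i j : ℝ)) _)
      exact ⟨μ, ⟨hμ, hcell, x, hAμ.trans hA⟩, hAμ.trans hA⟩
    · rintro ⟨μ, ⟨hμ, hcell, x, hx⟩, rfl⟩
      exact ⟨x, (mem_smul_convexHull_range_iff _ ht').mpr ⟨μ, hμ, hx⟩, hx.symm⟩
  have hinj : Injective fun x : Fin d → ℤ => ((fun j => (x j : ℝ)), (t : ℝ)) :=
    fun x y h => funext fun j => Int.cast_injective (congrFun (congrArg Prod.fst h) j)
  rw [← Set.ncard_image_of_injective _ hinj, himage]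
  exact Set.InjOn.ncard_image fun μ hμ ν hν h => IsCanonicalRep.eq hμ hν h

theorem ncard_latticePoints_modEq_one (hn : 0 < n) {p k : ℕ} (hp : p.Prime)
    (hk : Nat.log p d < k) :
    {x : Fin d → ℤ | (fun j => (x j : ℝ)) ∈
        ((p ^ k : ℕ) : ℝ) • convexHull ℝ (Set.range fun i j => (v i j : ℝ))}.ncard
      ≡ 1 [MOD p ^ (k - Nat.log p d)] := by
  have ht : d + 1 ≤ p ^ k := le_prime_pow_of_log_lt hp hk
  rw [← ZMod.natCast_eq_natCast_iff, ncard_latticePoints_eq_ncard_isCanonicalRep v (by omega),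
    ncard_isCanonicalRep ht, Nat.cast_sum, Nat.cast_one]
  calc ∑ β ∈ (boxPoints_finite v).toFinset,
        (((#(support β).toFinset).multichoose (p ^ k - ⌊∑ i, β i⌋₊) : ℕ) :
          ZMod (p ^ (k - Nat.log p d)))
      = ∑ β ∈ (boxPoints_finite v).toFinset, if ⌊∑ i, β i⌋₊ = #(support β).toFinset
          then -(-1) ^ #(support β).toFinset else 0 := by
        refine sum_congr rfl fun β hβ => ?_
        rw [Set.Finite.mem_toFinset] at hβ
        exact multichoose_prime_pow_sub hp hk (floor_sum_pos_of_mem_boxPoints hβ).ne'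
          (floor_sum_le_card_support hβ.2.1) (isCanonicalRep_of_mem_boxPoints hβ).card_support_le
    _ = ∑ T ∈ (lexCells (intConeMap v)).erase ∅, -(-1) ^ #T := by
        rw [← sum_filter, sum_boxPoints_saturated fun e => -(-1 : ZMod _) ^ e]
    _ = 1 := by
        have hempty : ∅ ∈ lexCells (intConeMap v) := by
          simpa [lexCells] using isLexCell_coneMap_empty _
        rw [sum_erase_eq_sub hempty, sum_neg_distrib, sum_lexCells_neg_one_pow _ hn]
        simp

end LatticePoints

/-- **Akopyan–Tagami, Lemma (convex lemma).**
Let `P` be a convex polytope in `ℝ^d` with vertices in `ℤ^d`, `p` a prime and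
`l = ⌊log_p d⌋`.  Then for any natural `k > l` the polytope `p^k • P` contains exactly
one lattice point modulo `p^(k - l)`. -/
theorem lattice_points_in_prime_power_dilate_modeq_one
    (d : ℕ) (p : ℕ) (hp : p.Prime)
    (V : Finset (Fin d → ℤ)) (hV : V.Nonempty)
    (P : Set (Fin d → ℝ))
    (hP : P = convexHull ℝ ((fun v : Fin d → ℤ => fun i => (v i : ℝ)) '' V))
    (k : ℕ) (hk : Nat.log p d < k) :
    {x : Fin d → ℤ | (fun i => (x i : ℝ)) ∈ ((p ^ k : ℕ) : ℝ) • P}.ncard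
      ≡ 1 [MOD p ^ (k - Nat.log p d)] := by
  have hV' : (fun v : Fin d → ℤ => fun i => (v i : ℝ)) '' V =
      Set.range fun i j => ((V.equivFin.symm i : Fin d → ℤ) j : ℝ) := by
    ext y
    constructor
    · rintro ⟨x, hx, rfl⟩
      exact ⟨V.equivFin ⟨x, hx⟩, by simp⟩
    · rintro ⟨i, rfl⟩
      exact ⟨_, (V.equivFin.symm i).2, rfl⟩
  rw [hP, hV']
  exact ncard_latticePoints_modEq_one _ (card_pos.mpr hV) hp hk
end

section
/- Let d ≥ 1 and n > 1 be natural numbers with prime factorization n = p₁^{α₁} p₂^{α₂} ⋯ p_s^{α_s}, and set t = p₁^{β₁} p₂^{β₂} ⋯ p_s^{β_s} where β_i = α_i + ⌊log_{p_i} d⌋. Then for every simplex Δ in ℝ^d with vertices in ℤ^d, the number of lattice points of ℤ^d contained in the dilated simplex t·Δ is congruent to 1 modulo n. -/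
/-!
Barycentric coordinates identify the lattice points of `t • Δ` with the points `c ≥ 0`,
`∑ cᵢ = t`, of the lattice `Λ = {c | ∑ cᵢ vᵢ ∈ ℤᵈ}`, which contains `ℤ^(k+1)` (`k = dim Δ ≤ d`).
Splitting `c` into integer and fractional parts, each fractional part `f`, of height
`h = ∑ fᵢ ∈ {0, …, k}` (with `h = 0` only for `f = 0`), is shared by `C(t - h + k, k)` of these
points. By Vandermonde, `C(t + j, k) ≡ C(j, k) [MOD n]` as soon as `n ∣ C(t, m)` for
`1 ≤ m ≤ k`, so only `f = 0` contributes and the count is `≡ 1`. That divisibility holds for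
`m ≤ d` because `m * C(t, m) = t * C(t - 1, m - 1)`, `p ^ (αₚ + ⌊log_p d⌋) ∣ t` and
`p ^ (⌊log_p d⌋ + 1) ∤ m`.
-/

open Finset
open scoped Pointwise

theorem Nat.Prime.pow_dvd_choose_of_pow_add_dvd {p a b t m : ℕ} (hp : p.Prime)
    (ht : p ^ (a + b) ∣ t) (hm : m ≠ 0) (hmb : m < p ^ (b + 1)) : p ^ a ∣ t.choose m := by
  rcases eq_or_ne (t.choose m) 0 with hc | hc
  · simp [hc]
  have ht0 : t ≠ 0 := by
    rintro rfl
    exact hc (Nat.choose_eq_zero_of_lt (Nat.pos_of_ne_zero hm))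
  -- `m * C(t, m) = t * C(t - 1, m - 1)`
  have hmul : p ^ (a + b) ∣ t.choose m * m := by
    refine ht.trans ⟨(t - 1).choose (m - 1), ?_⟩
    have := Nat.add_one_mul_choose_eq (t - 1) (m - 1)
    rwa [Nat.sub_add_cancel (Nat.one_le_iff_ne_zero.2 ht0),
      Nat.sub_add_cancel (Nat.one_le_iff_ne_zero.2 hm), eq_comm] at this
  have hvm : m.factorization p ≤ b := by
    by_contra! h
    exact hmb.not_ge (Nat.le_of_dvd (Nat.pos_of_ne_zero hm)
      ((hp.pow_dvd_iff_le_factorization hm).2 h))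
  rw [hp.pow_dvd_iff_le_factorization (mul_ne_zero hc hm), Nat.factorization_mul hc hm,
    Finsupp.add_apply] at hmul
  rw [hp.pow_dvd_iff_le_factorization hc]
  omega

theorem Nat.dvd_choose_of_forall_pow_add_log_dvd {n d t m : ℕ} (hn : n ≠ 0)
    (ht : ∀ p ∈ n.primeFactors, p ^ (n.factorization p + Nat.log p d) ∣ t)
    (hm : m ≠ 0) (hmd : m ≤ d) : n ∣ t.choose m := by
  refine (Nat.dvd_iff_prime_pow_dvd_dvd _ _).2 fun p k hp hpk => ?_
  rcases Nat.eq_zero_or_pos k with rfl | hk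
  · simp
  have hpn : p ∈ n.primeFactors :=
    Nat.mem_primeFactors.2 ⟨hp, (dvd_pow_self p hk.ne').trans hpk, hn⟩
  have hkα : k ≤ n.factorization p := (hp.pow_dvd_iff_le_factorization hn).1 hpk
  exact hp.pow_dvd_choose_of_pow_add_dvd ((pow_dvd_pow p (by omega)).trans (ht p hpn)) hm
    (hmd.trans_lt (Nat.lt_pow_succ_log_self hp.one_lt d))

theorem Nat.choose_add_modEq_choose {n t k : ℕ} (h : ∀ m, m ≠ 0 → m ≤ k → n ∣ t.choose m)
    (j : ℕ) : (t + j).choose k ≡ j.choose k [MOD n] := by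
  rw [Nat.add_choose_eq]
  refine (Nat.sum_modEq_single (a := (0, k)) (fun h0 => absurd (by simp) h0)
    fun ij hij hne => ?_).trans (by simp [Nat.ModEq.refl])
  rw [HasAntidiagonal.mem_antidiagonal] at hij
  have : ij.1 ≠ 0 := fun h1 => hne (Prod.ext h1 (by simp; omega))
  exact Nat.modEq_zero_iff_dvd.2 ((h _ this (by omega)).mul_right _)

theorem Finset.card_piAntidiag_univ {ι : Type*} [Fintype ι] [DecidableEq ι] (m : ℕ) :
    #(piAntidiag (univ : Finset ι) m) = (Fintype.card ι).multichoose m := by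
  rw [← map_sym_eq_piAntidiag, card_map, sym_univ, card_univ, Sym.card_sym_eq_multichoose]

theorem Nat.cast_floor_add_fract {R : Type*} [Ring R] [LinearOrder R] [FloorRing R] {x : R}
    (hx : 0 ≤ x) : (⌊x⌋₊ : R) + Int.fract x = x := by
  rw [natCast_floor_eq_intCast_floor hx, Int.floor_add_fract]

section StdSimplexLatticePoints

variable {ι : Type*}

theorem fract_mem_of_forall_intCast_mem {Λ : AddSubgroup (ι → ℝ)}
    (hΛ : ∀ a : ι → ℤ, (fun i => (a i : ℝ)) ∈ Λ) {c : ι → ℝ} (hc : c ∈ Λ) : Int.fract ∘ c ∈ Λ := by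
  have : Int.fract ∘ c = c - fun i => ((⌊c i⌋ : ℤ) : ℝ) :=
    funext fun i => (Int.self_sub_floor (c i)).symm
  exact this ▸ Λ.sub_mem hc (hΛ _)

variable [Fintype ι]

def stdSimplexLatticePoints (Λ : AddSubgroup (ι → ℝ)) (t : ℕ) : Set (ι → ℝ) :=
  {c | (∀ i, 0 ≤ c i) ∧ ∑ i, c i = t} ∩ Λ

variable {Λ : AddSubgroup (ι → ℝ)} {t : ℕ}

theorem sum_floor_add_sum_fract {c : ι → ℝ} (hc : ∀ i, 0 ≤ c i) :
    ((∑ i, ⌊c i⌋₊ : ℕ) : ℝ) + ∑ i, Int.fract (c i) = ∑ i, c i := by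
  push_cast
  rw [← sum_add_distrib]
  exact sum_congr rfl fun i _ => Nat.cast_floor_add_fract (hc i)

theorem card_filter_fract_eq [DecidableEq ι] (hΛ : ∀ a : ι → ℤ, (fun i => (a i : ℝ)) ∈ Λ)
    (hP : (stdSimplexLatticePoints Λ t).Finite) {c₀ : ι → ℝ}
    (hc₀ : c₀ ∈ stdSimplexLatticePoints Λ t) :
    #{c ∈ hP.toFinset | Int.fract ∘ c = Int.fract ∘ c₀} =
      #(piAntidiag (univ : Finset ι) (∑ i, ⌊c₀ i⌋₊)) := by
  obtain ⟨⟨hc₀0, hc₀t⟩, hc₀Λ⟩ := hc₀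
  have hsum₀ := sum_floor_add_sum_fract hc₀0
  refine card_nbij' (fun c i => ⌊c i⌋₊) (fun a i => Int.fract (c₀ i) + a i) ?_ ?_ ?_ ?_
  · intro c hc
    simp only [mem_coe, mem_filter, Set.Finite.mem_toFinset] at hc
    obtain ⟨⟨⟨hc0, hct⟩, -⟩, hfr⟩ := hc
    have hsum := sum_floor_add_sum_fract hc0
    have : ∑ i, Int.fract (c i) = ∑ i, Int.fract (c₀ i) := congrArg (∑ i, · i) hfr
    simp only [mem_coe, mem_piAntidiag, ne_eq, mem_univ, implies_true, and_true]
    exact_mod_cast (by linarith : ((∑ i, ⌊c i⌋₊ : ℕ) : ℝ) = ((∑ i, ⌊c₀ i⌋₊ : ℕ) : ℝ))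
  · intro a ha
    simp only [mem_coe, mem_piAntidiag] at ha
    simp only [mem_coe, mem_filter, Set.Finite.mem_toFinset]
    refine ⟨⟨⟨fun i => add_nonneg (Int.fract_nonneg _) (Nat.cast_nonneg _), ?_⟩,
      Λ.add_mem (fract_mem_of_forall_intCast_mem hΛ hc₀Λ) (by simpa using hΛ (fun i => a i))⟩,
      funext fun i => ?_⟩
    · rw [sum_add_distrib, ← Nat.cast_sum, ha.1, ← hc₀t, ← hsum₀, add_comm]
    · simp [Int.fract_add_natCast, Int.fract_fract]
  · intro c hc
    simp only [mem_coe, mem_filter, Set.Finite.mem_toFinset] at hc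
    obtain ⟨⟨⟨hc0, -⟩, -⟩, hfr⟩ := hc
    funext i
    dsimp only
    rw [← Function.comp_apply (f := Int.fract), ← hfr, Function.comp_apply, add_comm,
      Nat.cast_floor_add_fract (hc0 i)]
  · intro a ha
    funext i
    dsimp only
    rw [Nat.floor_add_natCast (Int.fract_nonneg _), Nat.floor_eq_zero.2 (Int.fract_lt_one _),
      zero_add]

theorem card_filter_fract_modEq [DecidableEq ι] [Nonempty ι]
    (hΛ : ∀ a : ι → ℤ, (fun i => (a i : ℝ)) ∈ Λ) (hP : (stdSimplexLatticePoints Λ t).Finite) {n : ℕ}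
    (hdvd : ∀ m, m ≠ 0 → m < Fintype.card ι → n ∣ t.choose m) {c₀ : ι → ℝ}
    (hc₀ : c₀ ∈ stdSimplexLatticePoints Λ t) :
    #{c ∈ hP.toFinset | Int.fract ∘ c = Int.fract ∘ c₀} ≡
      if Int.fract ∘ c₀ = 0 then 1 else 0 [MOD n] := by
  rw [card_filter_fract_eq hΛ hP hc₀, card_piAntidiag_univ, Nat.multichoose_eq]
  obtain ⟨⟨hc₀0, hc₀t⟩, -⟩ := hc₀
  set N := ∑ i, ⌊c₀ i⌋₊
  set k := Fintype.card ι - 1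
  have hsum : (N : ℝ) + ∑ i, Int.fract (c₀ i) = t := hc₀t ▸ sum_floor_add_sum_fract hc₀0
  have hlt : ∑ i, Int.fract (c₀ i) < Fintype.card ι := by
    calc ∑ i, Int.fract (c₀ i) < ∑ _i : ι, (1 : ℝ) :=
          sum_lt_sum_of_nonempty univ_nonempty fun i _ => Int.fract_lt_one _
      _ = Fintype.card ι := by simp
  have hNt : N ≤ t := by
    have := sum_nonneg fun i (_ : i ∈ univ) => Int.fract_nonneg (c₀ i)
    exact_mod_cast (by linarith : (N : ℝ) ≤ t)
  have htN : t < N + Fintype.card ι := by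
    exact_mod_cast (by linarith : (t : ℝ) < N + Fintype.card ι)
  rw [show Fintype.card ι + N - 1 = N + k by omega, Nat.choose_symm_add,
    show N + k = t + (N + k - t) by omega]
  refine (Nat.choose_add_modEq_choose (fun m hm hmk => hdvd m hm (by omega)) _).trans ?_
  split_ifs with h0
  · have : ∑ i, Int.fract (c₀ i) = 0 := sum_eq_zero fun i _ => congrFun h0 i
    rw [show N = t by exact_mod_cast (by linarith : (N : ℝ) = t), Nat.add_sub_cancel_left,
      Nat.choose_self]
  · have : 0 < ∑ i, Int.fract (c₀ i) := by
      obtain ⟨i, hi⟩ := Function.ne_iff.1 h0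
      exact sum_pos' (fun i _ => Int.fract_nonneg _)
        ⟨i, mem_univ i, (Int.fract_nonneg _).lt_of_ne' hi⟩
    rw [Nat.choose_eq_zero_of_lt]
    have : N < t := by exact_mod_cast (by linarith : (N : ℝ) < t)
    omega

theorem ncard_stdSimplexLatticePoints_modEq_one [Nonempty ι]
    (hΛ : ∀ a : ι → ℤ, (fun i => (a i : ℝ)) ∈ Λ) (hP : (stdSimplexLatticePoints Λ t).Finite)
    {n : ℕ} (hdvd : ∀ m, m ≠ 0 → m < Fintype.card ι → n ∣ t.choose m) :
    (stdSimplexLatticePoints Λ t).ncard ≡ 1 [MOD n] := by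
  classical
  obtain ⟨i₀⟩ := ‹Nonempty ι›
  have h₀ : (fun i => ((Pi.single i₀ t : ι → ℕ) i : ℝ)) ∈ stdSimplexLatticePoints Λ t :=
    ⟨⟨fun i => Nat.cast_nonneg _, by rw [← Nat.cast_sum]; simp⟩,
      by simpa using hΛ fun i => (Pi.single i₀ t : ι → ℕ) i⟩
  rw [Set.ncard_eq_toFinset_card _ hP, card_eq_sum_card_image (Int.fract ∘ ·) hP.toFinset]
  calc _ ≡ ∑ f ∈ hP.toFinset.image (Int.fract ∘ ·), if f = 0 then 1 else 0 [MOD n] :=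
        Nat.ModEq.sum fun f hf => by
          obtain ⟨c, hc, rfl⟩ := mem_image.1 hf
          exact card_filter_fract_modEq hΛ hP hdvd (hP.mem_toFinset.1 hc)
    _ = 1 := by
      rw [sum_ite_eq', if_pos]
      exact mem_image.2 ⟨_, hP.mem_toFinset.2 h₀, by ext; simp⟩

end StdSimplexLatticePoints

theorem AffineIndependent.eq_of_sum_eq_of_sum_smul_eq {k E ι : Type*} [Ring k] [AddCommGroup E]
    [Module k E] [Fintype ι] {w : ι → E} (hw : AffineIndependent k w) {c c' : ι → k}
    (hs : ∑ i, c i = ∑ i, c' i) (hv : ∑ i, c i • w i = ∑ i, c' i • w i) : c = c' := by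
  have hs0 : ∑ i, (c - c') i = 0 := by simp [sum_sub_distrib, hs]
  have h := (affineIndependent_iff_of_fintype k w).1 hw (c - c') hs0 (by
    rw [weightedVSub_eq_linear_combination _ hs0]
    simp [sub_smul, sum_sub_distrib, hv])
  exact funext fun i => sub_eq_zero.1 (h i)

section Geometry

variable {ι κ : Type*} [Fintype ι]

theorem smul_stdSimplex {t : ℝ} (ht : 0 < t) :
    t • stdSimplex ℝ ι = {c | (∀ i, 0 ≤ c i) ∧ ∑ i, c i = t} := by
  ext c
  rw [Set.mem_smul_set_iff_inv_smul_mem₀ ht.ne']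
  simp only [stdSimplex, Set.mem_ofPred_eq, Pi.smul_apply, smul_eq_mul, ← mul_sum]
  refine and_congr (forall_congr' fun i => ?_) ?_
  · exact ⟨fun h => by simpa [ht.ne'] using mul_nonneg ht.le h,
      fun h => mul_nonneg (inv_nonneg.2 ht.le) h⟩
  · rw [inv_mul_eq_one₀ ht.ne', eq_comm]

theorem convexHull_range_eq_image_stdSimplex_s2 {E : Type*} [AddCommGroup E] [Module ℝ E]
    (w : ι → E) : convexHull ℝ (Set.range w) = Fintype.linearCombination ℝ w '' stdSimplex ℝ ι := by
  classical
  rw [← convexHull_rangle_single_eq_stdSimplex, LinearMap.image_convexHull, ← Set.range_comp]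
  congr
  funext i
  simp [Fintype.linearCombination_apply_single]

theorem injOn_linearCombination_stdSimplexLatticePoints {E : Type*} [AddCommGroup E]
    [Module ℝ E] {w : ι → E} (hw : AffineIndependent ℝ w) (Λ : AddSubgroup (ι → ℝ)) (t : ℕ) :
    Set.InjOn (Fintype.linearCombination ℝ w) (stdSimplexLatticePoints Λ t) :=
  fun c hc c' hc' h => hw.eq_of_sum_eq_of_sum_smul_eq (hc.1.2.trans hc'.1.2.symm) (by
    simpa [Fintype.linearCombination_apply] using h)

variable [Fintype κ]

variable (κ) in
def integerLattice : Submodule ℤ (κ → ℝ) :=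
  Submodule.span ℤ (Set.range (Pi.basisFun ℝ κ))

theorem coe_integerLattice :
    (integerLattice κ : Set (κ → ℝ)) = Set.range fun (x : κ → ℤ) i => (x i : ℝ) := by
  ext y
  rw [SetLike.mem_coe, integerLattice, Module.Basis.mem_span_iff_repr_mem]
  simp [funext_iff, Classical.skolem]

theorem ncard_setOf_intCast_mem_s2 (B : Set (κ → ℝ)) :
    {x : κ → ℤ | (fun i => (x i : ℝ)) ∈ B}.ncard = (B ∩ integerLattice κ).ncard := by
  rw [← Set.ncard_image_of_injective _
    fun x y h => funext fun i => Int.cast_injective (α := ℝ) (congrFun h i),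
    coe_integerLattice]
  exact congrArg Set.ncard (Set.image_preimage_eq_inter_range)

def barycentricLattice (w : ι → κ → ℝ) : AddSubgroup (ι → ℝ) :=
  (integerLattice κ).toAddSubgroup.comap (Fintype.linearCombination ℝ w).toAddMonoidHom

variable {w : ι → κ → ℝ}

theorem AffineIndependent.card_le_card_add_one (hw : AffineIndependent ℝ w) :
    Fintype.card ι ≤ Fintype.card κ + 1 := by
  have := Submodule.finrank_le (vectorSpan ℝ (Set.range w))
  rw [Module.finrank_fintype_fun_eq_card] at this
  exact hw.card_le_finrank_succ.trans (by omega)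

theorem intCast_mem_barycentricLattice (hw : ∀ i, w i ∈ integerLattice κ) (a : ι → ℤ) :
    (fun i => (a i : ℝ)) ∈ barycentricLattice w := by
  change Fintype.linearCombination ℝ w _ ∈ integerLattice κ
  rw [Fintype.linearCombination_apply]
  exact Submodule.sum_mem _ fun i _ => Int.cast_smul_eq_zsmul ℝ (a i) (w i) ▸
    Submodule.smul_mem _ (a i) (hw i)

theorem image_stdSimplexLatticePoints {t : ℕ} (ht : 0 < t) :
    Fintype.linearCombination ℝ w '' stdSimplexLatticePoints (barycentricLattice w) t =
      (t : ℝ) • convexHull ℝ (Set.range w) ∩ integerLattice κ := by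
  rw [stdSimplexLatticePoints, ← smul_stdSimplex (Nat.cast_pos.2 ht),
    convexHull_range_eq_image_stdSimplex_s2, ← image_smul_set]
  exact Set.image_inter_preimage (Fintype.linearCombination ℝ w) _
    (integerLattice κ : Set (κ → ℝ))

theorem finite_stdSimplexLatticePoints (hw : AffineIndependent ℝ w) {t : ℕ} (ht : 0 < t) :
    (stdSimplexLatticePoints (barycentricLattice w) t).Finite := by
  refine Set.Finite.of_finite_image ?_ (injOn_linearCombination_stdSimplexLatticePoints hw _ t)
  rw [image_stdSimplexLatticePoints ht]
  exact ZSpan.setFinite_inter _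
    ((isBounded_convexHull.2 (Set.finite_range w).isBounded).smul₀ _)

theorem ncard_stdSimplexLatticePoints (hw : AffineIndependent ℝ w) {t : ℕ} (ht : 0 < t) :
    (stdSimplexLatticePoints (barycentricLattice w) t).ncard =
      ((t : ℝ) • convexHull ℝ (Set.range w) ∩ integerLattice κ).ncard := by
  rw [← image_stdSimplexLatticePoints ht,
    (injOn_linearCombination_stdSimplexLatticePoints hw _ t).ncard_image]

end Geometry

theorem lattice_points_in_dilated_simplex_modeq_one_general
    (d n : ℕ) (hn : 1 < n)
    (t : ℕ) (ht : t = ∏ p ∈ n.primeFactors, p ^ (n.factorization p + Nat.log p d))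
    (V : Finset (Fin d → ℤ)) (hV : V.Nonempty)
    (hindep : AffineIndependent ℝ (fun v : V => fun i => ((v : Fin d → ℤ) i : ℝ)))
    (Δ : Set (Fin d → ℝ))
    (hΔ : Δ = convexHull ℝ ((fun v : Fin d → ℤ => fun i => (v i : ℝ)) '' V)) :
    {x : Fin d → ℤ | (fun i => (x i : ℝ)) ∈ (t : ℝ) • Δ}.ncard ≡ 1 [MOD n] := by
  set w : V → Fin d → ℝ := fun v i => ((v : Fin d → ℤ) i : ℝ)
  have : Nonempty V := hV.to_subtype
  have hpow : ∀ p ∈ n.primeFactors, p ^ (n.factorization p + Nat.log p d) ∣ t :=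
    fun p hp => ht ▸ dvd_prod_of_mem _ hp
  have ht0 : 0 < t := ht ▸ prod_pos fun p hp => pow_pos (Nat.prime_of_mem_primeFactors hp).pos _
  have hΔ' : Δ = convexHull ℝ (Set.range w) := hΔ.trans (congrArg _ (Set.image_eq_range _ _))
  have hw : ∀ v, w v ∈ integerLattice (Fin d) := fun v => by
    rw [← SetLike.mem_coe, coe_integerLattice]
    exact ⟨v, rfl⟩
  have hcard : Fintype.card V ≤ d + 1 := by simpa using hindep.card_le_card_add_one
  rw [hΔ', ncard_setOf_intCast_mem_s2, ← ncard_stdSimplexLatticePoints hindep ht0]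
  exact ncard_stdSimplexLatticePoints_modEq_one (intCast_mem_barycentricLattice hw)
    (finite_stdSimplexLatticePoints hindep ht0)
    fun m hm hmV => Nat.dvd_choose_of_forall_pow_add_log_dvd (by omega) hpow hm (by omega)

/-- Let `n > 1` have prime factorization `n = ∏ pᵢ^αᵢ` and set
`t = ∏ pᵢ^βᵢ` with `βᵢ = αᵢ + ⌊log_{pᵢ} d⌋`.  Then for every simplex `Δ` in `ℝ^d`
with vertices in `ℤ^d`, the number of lattice points in `t • Δ` is `1` modulo `n`. -/
theorem lattice_points_in_dilated_simplex_modeq_one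
    (d n : ℕ) (hd : 1 ≤ d) (hn : 1 < n)
    (t : ℕ) (ht : t = ∏ p ∈ n.primeFactors, p ^ (n.factorization p + Nat.log p d))
    (V : Finset (Fin d → ℤ)) (hV : V.Nonempty)
    (hindep : AffineIndependent ℝ (fun v : V => fun i => ((v : Fin d → ℤ) i : ℝ)))
    (Δ : Set (Fin d → ℝ))
    (hΔ : Δ = convexHull ℝ ((fun v : Fin d → ℤ => fun i => (v i : ℝ)) '' V)) :
    {x : Fin d → ℤ | (fun i => (x i : ℝ)) ∈ (t : ℝ) • Δ}.ncard ≡ 1 [MOD n] :=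
  lattice_points_in_dilated_simplex_modeq_one_general d n hn t ht V hV hindep Δ hΔ
end

section
/- Let p be a prime, d ≥ 1, l = ⌊log_p d⌋, and k > l a natural number. Then the binomial coefficient C(p^k + d, d) is congruent to 1 modulo p^(k−l). -/
/-!
Write `i = p ^ vᵢ * uᵢ` with `p ∤ uᵢ`. If `p ^ m * p ^ vᵢ ∣ N`, then `N + i = p ^ vᵢ * (N / p ^ vᵢ + uᵢ)`
with `N / p ^ vᵢ ≡ 0 (mod p ^ m)`, so the recursion `i * C(N + i, i) = (N + i) * C(N + i - 1, i - 1)`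
becomes, after cancelling `p ^ vᵢ`, `uᵢ * C(N + i, i) ≡ uᵢ * C(N + i - 1, i - 1) (mod p ^ m)`, and `uᵢ`
is invertible mod `p ^ m`. For `N = p ^ k` and `i ≤ d` one has `vᵢ ≤ ⌊log_p d⌋`.
-/

open Nat

theorem Nat.choose_add_modEq_one_of_pow_mul_ordProj_dvd {p m N : ℕ} (hp : p.Prime) :
    ∀ d : ℕ, (∀ i ∈ Finset.Icc 1 d, p ^ m * ordProj[p] i ∣ N) →
      (N + d).choose d ≡ 1 [MOD p ^ m]
  | 0, _ => by simp [Nat.ModEq]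
  | d + 1, h => by
    have ih := choose_add_modEq_one_of_pow_mul_ordProj_dvd hp d fun i hi =>
      h i (Finset.Icc_subset_Icc_right d.le_succ hi)
    obtain ⟨q, hq⟩ := h (d + 1) (by simp)
    set e := ordProj[p] (d + 1)
    set a := ordCompl[p] (d + 1)
    have hea : e * a = d + 1 := ordProj_mul_ordCompl_eq_self _ _
    have hrec : (p ^ m * q + a) * (N + d).choose d = a * (N + (d + 1)).choose (d + 1) := by
      refine Nat.eq_of_mul_eq_mul_left (ordProj_pos (d + 1) p) ?_
      calc e * ((p ^ m * q + a) * (N + d).choose d)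
          = (N + d + 1) * (N + d).choose d := by rw [add_assoc N d 1, ← hea, hq]; ring
        _ = (N + (d + 1)).choose (d + 1) * (d + 1) := add_one_mul_choose_eq _ _
        _ = e * (a * (N + (d + 1)).choose (d + 1)) := by rw [← hea]; ring
    have hcop : (p ^ m).gcd a = 1 := (coprime_ordCompl hp d.succ_ne_zero).pow_left m
    refine Nat.ModEq.cancel_left_of_coprime hcop ?_
    calc a * (N + (d + 1)).choose (d + 1)
        = (p ^ m * q + a) * (N + d).choose d := hrec.symm
      _ ≡ (0 + a) * (N + d).choose d [MOD p ^ m] :=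
          ((Nat.modEq_zero_iff_dvd.mpr (dvd_mul_right _ q)).add_right a).mul_right _
      _ ≡ a * 1 [MOD p ^ m] := by rw [zero_add]; exact ih.mul_left a

theorem choose_prime_pow_add_modeq_one_general
    (p d : ℕ) (hp : p.Prime)
    (k : ℕ) (hk : Nat.log p d < k) :
    (p ^ k + d).choose d ≡ 1 [MOD p ^ (k - Nat.log p d)] := by
  refine choose_add_modEq_one_of_pow_mul_ordProj_dvd hp d fun i hi => ?_
  obtain ⟨hi1, hid⟩ := Finset.mem_Icc.mp hi
  have hv : i.factorization p ≤ Nat.log p d :=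
    le_log_of_pow_le hp.one_lt ((ordProj_le p (by omega)).trans hid)
  rw [← pow_add]
  exact pow_dvd_pow p (by omega)

/-- Let `p` be prime, `d ≥ 1`, `l = ⌊log_p d⌋` and `k > l`.  Then
`C(p^k + d, d) ≡ 1 (mod p^(k - l))`. -/
theorem choose_prime_pow_add_modeq_one
    (p d : ℕ) (hp : p.Prime) (hd : 1 ≤ d)
    (k : ℕ) (hk : Nat.log p d < k) :
    (p ^ k + d).choose d ≡ 1 [MOD p ^ (k - Nat.log p d)] :=
  choose_prime_pow_add_modeq_one_general p d hp k hk
end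

section
/- Let p be a prime, d ≥ 1, l = ⌊log_p d⌋, and k > l a natural number. Then for every integer i with 1 ≤ i ≤ d, the binomial coefficient C(p^k + d − i, d) is congruent to 0 modulo p^(k−l). -/
/-!
By Kummer's theorem, the `p`-adic valuation of `C(p^k - i + d, d)` is the number of carries when
`d` and `p^k - i` are added in base `p`. For every `j` with `d < p^j ≤ p^k` the low `j` digits of
`p^k - i` form `p^j - i`, and `d + (p^j - i) ≥ p^j`, so each of the `k - ⌊log_p d⌋` positions
`⌊log_p d⌋ + 1, …, k` produces a carry.
-/

open Nat Finset

theorem le_mod_add_sub_mod_of_dvd {m N d i : ℕ} (hmN : m ∣ N) (hN : 0 < N) (hi : 0 < i)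
    (hid : i ≤ d) (hdm : d < m) : m ≤ d % m + (N - i) % m := by
  obtain ⟨c, rfl⟩ := hmN
  obtain ⟨c, rfl⟩ : ∃ c', c = c' + 1 := Nat.exists_eq_add_one.2 (Nat.pos_of_mul_pos_left hN)
  have hsplit : m * (c + 1) - i = m - i + m * c := by rw [Nat.mul_succ]; omega
  rw [hsplit, Nat.add_mul_mod_self_left, Nat.mod_eq_of_lt hdm, Nat.mod_eq_of_lt (by omega)]
  omega

theorem pow_sub_log_dvd_choose_pow_sub_add {p d k i : ℕ} (hp : p.Prime) (hk : log p d < k)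
    (hi : 0 < i) (hid : i ≤ d) : p ^ (k - log p d) ∣ (p ^ k - i + d).choose d := by
  set l := log p d
  have hdl : d < p ^ (l + 1) := lt_pow_succ_log_self hp.one_lt d
  have hdk : d < p ^ k := lt_pow_of_log_lt hp.one_lt hk
  have hlog : log p (p ^ k - i + d) < k + 1 := by
    refine log_lt_of_lt_pow' (succ_ne_zero k) ?_
    calc p ^ k - i + d < p ^ k * 2 := by omega
      _ ≤ p ^ k * p := Nat.mul_le_mul_left _ hp.two_le
      _ = p ^ (k + 1) := (pow_succ p k).symm
  have hcarries : Icc (l + 1) k ⊆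
      {j ∈ Ico 1 (k + 1) | p ^ j ≤ d % p ^ j + (p ^ k - i) % p ^ j} := by
    intro j hj
    rw [mem_Icc] at hj
    rw [mem_filter, mem_Ico]
    exact ⟨by omega, le_mod_add_sub_mod_of_dvd (pow_dvd_pow p hj.2) (pow_pos hp.pos k) hi hid
      (hdl.trans_le (Nat.pow_le_pow_right hp.pos hj.1))⟩
  have hval : k - l ≤ ((p ^ k - i + d).choose d).factorization p := by
    rw [factorization_choose' hp hlog]
    calc k - l = #(Icc (l + 1) k) := by rw [card_Icc]; omega
      _ ≤ _ := card_le_card hcarries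
  exact (pow_dvd_pow p hval).trans (ordProj_dvd _ p)

theorem choose_prime_pow_add_sub_modeq_zero_general
    (p d : ℕ) (hp : p.Prime)
    (k : ℕ) (hk : Nat.log p d < k)
    (i : ℕ) (hi1 : 1 ≤ i) (hid : i ≤ d) :
    (p ^ k + d - i).choose d ≡ 0 [MOD p ^ (k - Nat.log p d)] := by
  have hik : i ≤ p ^ k := hid.trans (lt_pow_of_log_lt hp.one_lt hk).le
  rw [Nat.modEq_zero_iff_dvd, show p ^ k + d - i = p ^ k - i + d by omega]
  exact pow_sub_log_dvd_choose_pow_sub_add hp hk hi1 hid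

/-- Let `p` be prime, `d ≥ 1`, `l = ⌊log_p d⌋` and `k > l`.  Then for every `1 ≤ i ≤ d`,
`C(p^k + d - i, d) ≡ 0 (mod p^(k - l))`. -/
theorem choose_prime_pow_add_sub_modeq_zero
    (p d : ℕ) (hp : p.Prime) (hd : 1 ≤ d)
    (k : ℕ) (hk : Nat.log p d < k)
    (i : ℕ) (hi1 : 1 ≤ i) (hid : i ≤ d) :
    (p ^ k + d - i).choose d ≡ 0 [MOD p ^ (k - Nat.log p d)] :=
  choose_prime_pow_add_sub_modeq_zero_general p d hp k hk i hi1 hid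
end
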